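/- arXiv:1806.04188 — 3 statements merged into one kernel-verified Lean document; each statement's English description precedes it below -/
import Mathlib

section
/- Let M be a nonempty simple binary matroid. Then M ∈ ℰ₃ if and only if M arises from a Bose–Burton geometry of order 1 or 2 by a sequence of semidoublings. -/
/-- A simple binary matroid `M = (E, G)`: a dimension `n` together with a ground set `E`
of nonzero vectors of `𝔽₂ⁿ` (the points of `G = 𝔽₂ⁿ \ {0}`). -/
structure BinMatroid where
  dim : ℕ
  E : Set (Fin dim → ZMod 2)
  zero_not_mem : 0 ∉ E

namespace BinMatroid

/-- `M.HasIR N` : `M` contains `N` as an induced restriction, i.e. there is an injective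
linear map `φ` with `φ(E(N)) = E(M) ∩ (φ(G') \ {0})`. -/
def HasIR (M N : BinMatroid) : Prop :=
  ∃ φ : (Fin N.dim → ZMod 2) →ₗ[ZMod 2] (Fin M.dim → ZMod 2),
    Function.Injective φ ∧ φ '' N.E = M.E ∩ (Set.range φ \ {0})

/-- Isomorphism of binary matroids: a bijective induced embedding. -/
def Iso (M N : BinMatroid) : Prop :=
  ∃ φ : (Fin N.dim → ZMod 2) →ₗ[ZMod 2] (Fin M.dim → ZMod 2),
    Function.Bijective φ ∧ φ '' N.E = M.E ∩ (Set.range φ \ {0})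

/-- The critical number of the induced restriction of the ground set `E` to the flat of
the subspace `F`: the least `k` such that some flat of `F` of dimension `dim F - k`
is disjoint from `E`. -/
noncomputable def critNumRes {n : ℕ} (E : Set (Fin n → ZMod 2))
    (F : Submodule (ZMod 2) (Fin n → ZMod 2)) : ℕ :=
  sInf {k : ℕ | ∃ W : Submodule (ZMod 2) (Fin n → ZMod 2), W ≤ F ∧
    Module.finrank (ZMod 2) W = Module.finrank (ZMod 2) F - k ∧
    Disjoint ((W : Set (Fin n → ZMod 2)) \ {0}) E}

/-- The critical number `χ(M)`: the least `k ≥ 0` such that some flat of dimension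
`n - k` is disjoint from `E`. -/
noncomputable def critNum (M : BinMatroid) : ℕ :=
  sInf {k : ℕ | ∃ W : Submodule (ZMod 2) (Fin M.dim → ZMod 2),
    Module.finrank (ZMod 2) W = M.dim - k ∧
    Disjoint ((W : Set (Fin M.dim → ZMod 2)) \ {0}) M.E}

/-- `M ∈ ℰ_k` : every induced restriction of `M` to a flat of dimension at least `k`
has even size. -/
def MemE (k : ℕ) (M : BinMatroid) : Prop :=
  ∀ W : Submodule (ZMod 2) (Fin M.dim → ZMod 2),
    k ≤ Module.finrank (ZMod 2) W →
    Even (M.E ∩ ((W : Set (Fin M.dim → ZMod 2)) \ {0})).ncard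

/-- `M` is full-rank: `E` spans `𝔽₂ⁿ`. -/
def FullRank (M : BinMatroid) : Prop :=
  Submodule.span (ZMod 2) M.E = ⊤

/-- `M` is (isomorphic to) the doubling of `M₀`: `M₀` is identified, via an injective
linear map `φ`, with the restriction of `M` to a hyperplane `H = range φ`, there is
`w ∈ G − (E ∪ H)`, and `E = (E ∩ H) ∪ (w + (E ∩ H))`. -/
def IsDoublingOf (M M₀ : BinMatroid) : Prop :=
  M.dim = M₀.dim + 1 ∧
  ∃ φ : (Fin M₀.dim → ZMod 2) →ₗ[ZMod 2] (Fin M.dim → ZMod 2),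
    Function.Injective φ ∧
    ∃ w : Fin M.dim → ZMod 2, w ≠ 0 ∧ w ∉ Set.range φ ∧ w ∉ M.E ∧
      M.E = φ '' M₀.E ∪ (fun x => w + x) '' (φ '' M₀.E)

/-- `M` arises from `M₀` by a (possibly empty) sequence of doublings. -/
def ArisesByDoublings (M M₀ : BinMatroid) : Prop :=
  ∃ M' : BinMatroid,
    Relation.ReflTransGen (fun A B => IsDoublingOf B A) M₀ M' ∧ M.Iso M'

/-- `M` is (a copy of) `AG°(t−1, 2)`, the matroid `((G − H) ∪ {x}, G)` with `H` a
hyperplane of `G` and `x ∈ H`, where `t = M.dim`. -/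
def IsAGo (M : BinMatroid) : Prop :=
  ∃ H : Submodule (ZMod 2) (Fin M.dim → ZMod 2),
    Module.finrank (ZMod 2) H + 1 = M.dim ∧
    ∃ x ∈ (H : Set (Fin M.dim → ZMod 2)) \ {0},
      M.E = ({v | v ≠ 0} \ (H : Set (Fin M.dim → ZMod 2))) ∪ {x}

/-- `M` is a Bose–Burton geometry of order `k`: `E = G − F` for a flat `F` of
dimension `n − k`. -/
def IsBoseBurton (M : BinMatroid) (k : ℕ) : Prop :=
  k ≤ M.dim ∧ ∃ W : Submodule (ZMod 2) (Fin M.dim → ZMod 2),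
    Module.finrank (ZMod 2) W = M.dim - k ∧
    M.E = {v | v ≠ 0} \ (W : Set (Fin M.dim → ZMod 2))

/-- The ground set `E` (of a matroid of the ambient dimension `n`) is the semidoubling
of its restriction to the hyperplane `H₁` with respect to the hyperplane `H₀` of `H₁`:
there is `w ∈ G − (E ∪ H₁)` with `|{x, x+w} ∩ E| ∈ {0, 2}` for every `x ∈ H₀` and
`|{x, x+w} ∩ E| = 1` for every `x ∈ H₁ − H₀`. -/
def IsSemidoublingWrt {n : ℕ} (E : Set (Fin n → ZMod 2))
    (H₁ H₀ : Submodule (ZMod 2) (Fin n → ZMod 2)) : Prop :=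
  H₀ ≤ H₁ ∧ Module.finrank (ZMod 2) H₀ + 1 = Module.finrank (ZMod 2) H₁ ∧
  ∃ w : Fin n → ZMod 2, w ≠ 0 ∧ w ∉ H₁ ∧ w ∉ E ∧
    (∀ x ∈ (H₀ : Set (Fin n → ZMod 2)) \ {0},
      (({x, x + w} : Set (Fin n → ZMod 2)) ∩ E).ncard = 0 ∨
      (({x, x + w} : Set (Fin n → ZMod 2)) ∩ E).ncard = 2) ∧
    (∀ x ∈ (H₁ : Set (Fin n → ZMod 2)) \ (H₀ : Set (Fin n → ZMod 2)),
      (({x, x + w} : Set (Fin n → ZMod 2)) ∩ E).ncard = 1)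

/-- The ground set `E` is a semidoubling of its restriction to the hyperplane `H₁`
(with respect to some hyperplane `H₀` of `H₁`). -/
def IsSemidoublingOfRes {n : ℕ} (E : Set (Fin n → ZMod 2))
    (H₁ : Submodule (ZMod 2) (Fin n → ZMod 2)) : Prop :=
  ∃ H₀ : Submodule (ZMod 2) (Fin n → ZMod 2), IsSemidoublingWrt E H₁ H₀

/-- `M` is (isomorphic to) a semidoubling of `M₀`: `M₀` is identified, via an injective
linear map `φ`, with the restriction of `M` to the hyperplane `range φ`, and `M` is a
semidoubling of that restriction. -/
def IsSemidoublingOf (M M₀ : BinMatroid) : Prop :=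
  M.dim = M₀.dim + 1 ∧
  ∃ φ : (Fin M₀.dim → ZMod 2) →ₗ[ZMod 2] (Fin M.dim → ZMod 2),
    Function.Injective φ ∧
    φ '' M₀.E = M.E ∩ (Set.range φ \ {0}) ∧
    IsSemidoublingOfRes M.E (LinearMap.range φ)

/-- `M` arises from `M₀` by a (possibly empty) sequence of semidoublings. -/
def ArisesBySemidoublings (M M₀ : BinMatroid) : Prop :=
  ∃ M' : BinMatroid,
    Relation.ReflTransGen (fun A B => IsSemidoublingOf B A) M₀ M' ∧ M.Iso M'

end BinMatroid

/-- A triangle of `G`: a set `{x, y, z}` of three distinct nonzero vectors with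
`x + y + z = 0`. -/
def IsTriangle {n : ℕ} (T : Set (Fin n → ZMod 2)) : Prop :=
  ∃ x y z : Fin n → ZMod 2, x ≠ 0 ∧ y ≠ 0 ∧ z ≠ 0 ∧
    x ≠ y ∧ x ≠ z ∧ y ≠ z ∧ x + y + z = 0 ∧ T = {x, y, z}

/-- `I₃`, the claw: the 3-dimensional matroid whose ground set is the three standard
basis vectors of `𝔽₂³`. -/
def I3 : BinMatroid where
  dim := 3
  E := Set.range fun i : Fin 3 => (Pi.single i 1 : Fin 3 → ZMod 2)
  zero_not_mem := by
    rintro ⟨i, hi⟩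
    have := congrFun hi i
    simp [Pi.single_eq_same] at this

/-- `F₇`, the Fano plane: the 3-dimensional matroid whose ground set is all of
`𝔽₂³ \ {0}`. -/
def F7 : BinMatroid where
  dim := 3
  E := {v | v ≠ 0}
  zero_not_mem := by simp

/-- `K₅`: the 4-dimensional matroid whose ground set is the set of vectors of Hamming
weight 1 or 2 in `𝔽₂⁴`. -/
def K5 : BinMatroid where
  dim := 4
  E := {v | hammingNorm v = 1 ∨ hammingNorm v = 2}
  zero_not_mem := by
    intro h
    simp only [Set.mem_setOf_eq, hammingNorm_zero] at h
    omega
namespace BB11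

open Module Set Finset

abbrev V (n : ℕ) := Fin n → ZMod 2

lemma z_cases : ∀ a : ZMod 2, a = 0 ∨ a = 1 := by decide

lemma z_add_self : ∀ a : ZMod 2, a + a = 0 := by decide

lemma z_ne : ∀ a : ZMod 2, a ≠ 0 → a = 1 := by decide

variable {n : ℕ}

lemma vv (x : V n) : x + x = 0 := funext fun i => z_add_self (x i)

lemma vadd_eq_zero {x y : V n} : x + y = 0 ↔ x = y := by
  constructor
  · intro h
    have h2 : x + y + y = 0 + y := by rw [h]
    rwa [add_assoc, vv, add_zero, zero_add] at h2
  · rintro rfl; exact vv x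

lemma vcancel (x y : V n) : x + (x + y) = y := by rw [← add_assoc, vv, zero_add]

lemma vxyx (x y : V n) : x + y + x = y := by rw [add_comm x y, add_assoc, vv, add_zero]

lemma vxyy (x y : V n) : x + y + y = x := by rw [add_assoc, vv, add_zero]

/-- indicator function of `E` with values in `ZMod 2`. -/
noncomputable def ind (E : Set (V n)) (v : V n) : ZMod 2 :=
  haveI := Classical.dec (v ∈ E)
  if v ∈ E then 1 else 0

lemma ind_of_mem {E : Set (V n)} {v : V n} (h : v ∈ E) : ind E v = 1 := by
  simp [ind, h]

lemma ind_of_not_mem {E : Set (V n)} {v : V n} (h : v ∉ E) : ind E v = 0 := by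
  simp [ind, h]

lemma mem_of_ind {E : Set (V n)} {v : V n} (h : ind E v = 1) : v ∈ E := by
  by_contra hc
  rw [ind_of_not_mem hc] at h
  exact absurd h (by decide)

lemma mem_of_ind_ne {E : Set (V n)} {v : V n} (h : ind E v ≠ 0) : v ∈ E :=
  mem_of_ind (z_ne _ h)

/-- `E` is "quadratic": all third differences of its indicator vanish. -/
def QuadSet (E : Set (V n)) : Prop :=
  ∀ x y z : V n, ind E (x+y+z) =
    ind E x + ind E y + ind E z + ind E (x+y) + ind E (x+z) + ind E (y+z)

/-- additivity of the polar form in the second argument -/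
lemma Bf_add {E : Set (V n)} (hq : QuadSet E) (x u v : V n) :
    ind E x + ind E (u+v) + ind E (x+(u+v)) =
      (ind E x + ind E u + ind E (x+u)) + (ind E x + ind E v + ind E (x+v)) := by
  have h := hq u v x
  have e1 : x + (u + v) = u + v + x := by rw [add_comm]
  have e2 : x + u = u + x := by rw [add_comm]
  have e3 : x + v = v + x := by rw [add_comm]
  rw [e1, e2, e3]
  revert h
  generalize ind E u = a
  generalize ind E v = b
  generalize ind E x = c
  generalize ind E (u+v) = ab
  generalize ind E (u+x) = ac
  generalize ind E (v+x) = bc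
  generalize ind E (u+v+x) = abc
  revert a b c ab ac bc abc
  decide

end BB11
namespace BB11

variable {n : ℕ}

open Module Set Finset

lemma zsum {M : Type*} [AddCommMonoid M] (F : ZMod 2 → M) :
    ∑ t : ZMod 2, F t = F 0 + F 1 := by
  have h : (Finset.univ : Finset (ZMod 2)) = {0, 1} := by decide
  rw [h, Finset.sum_insert (by decide), Finset.sum_singleton]

lemma sum_ind (S : Set (V n)) : ∑ v : V n, ind S v = (S.ncard : ZMod 2) := by
  classical
  have h1 : ∀ v : V n, ind S v = if v ∈ S then (1 : ZMod 2) else 0 := by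
    intro v
    by_cases hv : v ∈ S
    · rw [ind_of_mem hv, if_pos hv]
    · rw [ind_of_not_mem hv, if_neg hv]
  rw [Finset.sum_congr rfl (fun v _ => h1 v), Finset.sum_boole,
    Set.filter_mem_univ_eq_toFinset, Set.ncard_eq_toFinset_card']

lemma even_iff_sum (S : Set (V n)) : Even S.ncard ↔ ∑ v : V n, ind S v = 0 := by
  rw [sum_ind, ZMod.natCast_eq_zero_iff, even_iff_two_dvd]

lemma inter_diff_zero {E : Set (V n)} (h0 : (0 : V n) ∉ E) (W : Set (V n)) :
    E ∩ (W \ {0}) = E ∩ W := by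
  ext v
  constructor
  · rintro ⟨he, hw, _⟩; exact ⟨he, hw⟩
  · rintro ⟨he, hw⟩
    exact ⟨he, hw, by rintro (rfl : v = 0); exact h0 he⟩

lemma sum_ind_inter_range {α : Type} [AddCommGroup α] [Module (ZMod 2) α] [Fintype α]
    [DecidableEq α] (ψ : α →ₗ[ZMod 2] V n) (hinj : Function.Injective ψ) (E : Set (V n)) :
    ∑ v : V n, ind (E ∩ (LinearMap.range ψ : Set (V n))) v = ∑ p : α, ind E (ψ p) := by
  classical
  have h1 : ∀ v : V n, ind (E ∩ (LinearMap.range ψ : Set (V n))) v =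
      if v ∈ Set.range ψ then ind E v else 0 := by
    intro v
    by_cases hv : v ∈ Set.range ψ
    · rw [if_pos hv]
      by_cases hE : v ∈ E
      · rw [ind_of_mem hE, ind_of_mem (Set.mem_inter hE (by simpa using hv))]
      · rw [ind_of_not_mem hE, ind_of_not_mem (fun hc => hE hc.1)]
    · rw [if_neg hv, ind_of_not_mem (fun hc => hv hc.2)]
  rw [Finset.sum_congr rfl (fun v _ => h1 v), ← Finset.sum_filter]
  have h2 : (Finset.univ.filter (fun v => v ∈ Set.range ψ)) = Finset.univ.image ψ := by
    rw [Set.filter_mem_univ_eq_toFinset, Set.toFinset_range]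
  rw [h2, Finset.sum_image (fun a _ b _ h => hinj h)]

lemma exists_psi (W : Submodule (ZMod 2) (V n)) :
    ∃ ψ : (Fin (finrank (ZMod 2) W) → ZMod 2) →ₗ[ZMod 2] V n,
      Function.Injective ψ ∧ LinearMap.range ψ = W := by
  let b := Module.finBasis (ZMod 2) W
  refine ⟨W.subtype ∘ₗ b.equivFun.symm.toLinearMap, ?_, ?_⟩
  · exact W.injective_subtype.comp b.equivFun.symm.injective
  · rw [LinearMap.range_comp, LinearEquiv.range, Submodule.map_top, Submodule.range_subtype]

lemma cons_add {m : ℕ} (a b : ZMod 2) (u v : Fin m → ZMod 2) :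
    (Fin.cons a u : Fin (m+1) → ZMod 2) + Fin.cons b v = Fin.cons (a+b) (u+v) := by
  funext i
  refine Fin.cases ?_ ?_ i <;> simp

lemma sum_quad {d : ℕ} (hd : 3 ≤ d) (g : (Fin d → ZMod 2) → ZMod 2)
    (hg : ∀ x y z, g (x+y+z) = g x + g y + g z + g (x+y) + g (x+z) + g (y+z)) :
    ∑ p : Fin d → ZMod 2, g p = 0 := by
  obtain ⟨k, rfl⟩ : ∃ k, d = k + 3 := ⟨d - 3, by omega⟩
  have e1 : ∑ p : Fin (k+3) → ZMod 2, g p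
      = ∑ x : ZMod 2 × (Fin (k+2) → ZMod 2), g (Fin.cons x.1 x.2) :=
    (Equiv.sum_comp (Fin.consEquiv (fun _ => ZMod 2)) g).symm
  have e2 : ∀ a : ZMod 2, ∑ v : Fin (k+2) → ZMod 2, g (Fin.cons a v)
      = ∑ y : ZMod 2 × (Fin (k+1) → ZMod 2), g (Fin.cons a (Fin.cons y.1 y.2)) := fun a =>
    (Equiv.sum_comp (Fin.consEquiv (fun _ => ZMod 2)) (fun v => g (Fin.cons a v))).symm
  rw [e1, Fintype.sum_prod_type]
  simp only [e2]
  simp only [Fintype.sum_prod_type]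
  rw [zsum (fun a => _)]
  rw [zsum (fun b => ∑ c : Fin (k+1) → ZMod 2, g (Fin.cons 0 (Fin.cons b c))),
      zsum (fun b => ∑ c : Fin (k+1) → ZMod 2, g (Fin.cons 1 (Fin.cons b c)))]
  rw [← Finset.sum_add_distrib, ← Finset.sum_add_distrib, ← Finset.sum_add_distrib]
  set X : Fin (k+3) → ZMod 2 := Fin.cons 1 (Fin.cons 0 0) with hX
  set Y : Fin (k+3) → ZMod 2 := Fin.cons 0 (Fin.cons 1 0) with hY
  have hconst : ∀ c : Fin (k+1) → ZMod 2,
      g (Fin.cons 0 (Fin.cons 0 c)) + g (Fin.cons 0 (Fin.cons 1 c))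
        + (g (Fin.cons 1 (Fin.cons 0 c)) + g (Fin.cons 1 (Fin.cons 1 c)))
      = g X + g Y + g (X + Y) := by
    intro c
    set Z : Fin (k+3) → ZMod 2 := Fin.cons 0 (Fin.cons 0 c) with hZ
    have hXZ : X + Z = Fin.cons 1 (Fin.cons 0 c) := by
      rw [hX, hZ, cons_add, cons_add]; norm_num
    have hYZ : Y + Z = Fin.cons 0 (Fin.cons 1 c) := by
      rw [hY, hZ, cons_add, cons_add]; norm_num
    have hXY : X + Y = Fin.cons 1 (Fin.cons 1 0) := by
      rw [hX, hY, cons_add, cons_add]; norm_num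
    have hXYZ : X + Y + Z = Fin.cons 1 (Fin.cons 1 c) := by
      rw [hXY, hZ, cons_add, cons_add]; norm_num
    have h := hg X Y Z
    rw [← hXZ, ← hYZ, ← hXYZ]
    revert h
    generalize g X = a
    generalize g Y = b
    generalize g Z = z
    generalize g (X+Y) = ab
    generalize g (X+Z) = az
    generalize g (Y+Z) = bz
    generalize g (X+Y+Z) = abz
    revert a b z ab az bz abz
    decide
  rw [Finset.sum_congr rfl (fun c _ => hconst c), Finset.sum_const, Finset.card_univ]
  have hcard : Fintype.card (Fin (k+1) → ZMod 2) = 2^(k+1) := by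
    rw [Fintype.card_fun]; simp
  rw [hcard, nsmul_eq_mul]
  have h2 : (((2:ℕ)^(k+1) : ℕ) : ZMod 2) = 0 := by
    rw [Nat.cast_pow]
    have h3 : ((2:ℕ) : ZMod 2) = 0 := by decide
    rw [h3, zero_pow (Nat.succ_ne_zero k)]
  rw [h2, zero_mul]

end BB11
namespace BB11

variable {n : ℕ}

open Module Set Finset

/-- The linear map `(a,b,c) ↦ ax+by+cz`. -/
def psi3 (x y z : V n) : (ZMod 2 × ZMod 2 × ZMod 2) →ₗ[ZMod 2] V n where
  toFun p := p.1 • x + p.2.1 • y + p.2.2 • z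
  map_add' p q := by
    show (p.1 + q.1) • x + (p.2.1 + q.2.1) • y + (p.2.2 + q.2.2) • z = _
    simp only [add_smul]
    abel
  map_smul' c p := by
    show (c * p.1) • x + (c * p.2.1) • y + (c * p.2.2) • z = _
    simp only [RingHom.id_apply, smul_add, mul_smul, smul_eq_mul]

lemma psi3_apply (x y z : V n) (p : ZMod 2 × ZMod 2 × ZMod 2) :
    psi3 x y z p = p.1 • x + p.2.1 • y + p.2.2 • z := rfl

lemma finrank_M3 : finrank (ZMod 2) (ZMod 2 × ZMod 2 × ZMod 2) = 3 := by
  rw [Module.finrank_prod, Module.finrank_prod, Module.finrank_self]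

lemma psi3_inj {x y z : V n} (h1 : x ≠ 0) (h2 : y ≠ 0) (h3 : z ≠ 0)
    (h4 : x + y ≠ 0) (h5 : x + z ≠ 0) (h6 : y + z ≠ 0) (h7 : x + y + z ≠ 0) :
    Function.Injective (psi3 x y z) := by
  rw [injective_iff_map_eq_zero]
  rintro ⟨a, b, c⟩ hp
  rw [psi3_apply] at hp
  rcases z_cases a with rfl | rfl <;> rcases z_cases b with rfl | rfl <;>
    rcases z_cases c with rfl | rfl <;>
    simp only [zero_smul, one_smul, zero_add, add_zero] at hp <;>
    first
      | rfl
      | exact absurd hp (by assumption)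

lemma quad_memE (M : BinMatroid) (hq : QuadSet M.E) : M.MemE 3 := by
  intro W hW
  have h0 : (0 : V M.dim) ∉ M.E := M.zero_not_mem
  rw [inter_diff_zero h0, even_iff_sum]
  obtain ⟨ψ, hinj, hrange⟩ := exists_psi W
  rw [← hrange, sum_ind_inter_range ψ hinj]
  refine sum_quad ?_ (fun p => ind M.E (ψ p)) ?_
  · rwa [← hrange, LinearMap.finrank_range_of_inj hinj, Module.finrank_pi,
      Fintype.card_fin] at hW
  · intro a b c
    simp only [map_add]
    exact hq _ _ _

lemma memE_quad (M : BinMatroid) (h : M.MemE 3) : QuadSet M.E := by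
  have h0 : (0 : V M.dim) ∉ M.E := M.zero_not_mem
  intro x y z
  by_cases c1 : x = 0
  · subst c1
    simp only [zero_add, ind_of_not_mem h0]
    generalize ind M.E y = a
    generalize ind M.E z = b
    generalize ind M.E (y + z) = c
    revert a b c; decide
  by_cases c2 : y = 0
  · subst c2
    simp only [zero_add, add_zero, ind_of_not_mem h0]
    generalize ind M.E x = a
    generalize ind M.E z = b
    generalize ind M.E (x + z) = c
    revert a b c; decide
  by_cases c3 : z = 0
  · subst c3
    simp only [zero_add, add_zero, ind_of_not_mem h0]
    generalize ind M.E x = a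
    generalize ind M.E y = b
    generalize ind M.E (x + y) = c
    revert a b c; decide
  by_cases c4 : x = y
  · subst c4
    rw [vv x]
    simp only [zero_add, ind_of_not_mem h0]
    generalize ind M.E x = a
    generalize ind M.E z = b
    generalize ind M.E (x + z) = c
    revert a b c; decide
  by_cases c5 : x = z
  · subst c5
    rw [vxyx, vv x]
    rw [show x + y = y + x from add_comm x y] at *
    simp only [ind_of_not_mem h0]
    generalize ind M.E x = a
    generalize ind M.E y = b
    generalize ind M.E (y + x) = c
    revert a b c; decide
  by_cases c6 : y = z
  · subst c6
    rw [vxyy, vv y]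
    simp only [ind_of_not_mem h0]
    generalize ind M.E x = a
    generalize ind M.E y = b
    generalize ind M.E (x + y) = c
    revert a b c; decide
  by_cases c7 : z = x + y
  · subst c7
    rw [show x + y + (x + y) = 0 from vv _, show x + (x + y) = y from vcancel x y,
      show y + (x + y) = x from by rw [add_comm x y]; exact vcancel y x]
    simp only [ind_of_not_mem h0]
    generalize ind M.E x = a
    generalize ind M.E y = b
    generalize ind M.E (x + y) = c
    revert a b c; decide
  -- independent case
  have h4 : x + y ≠ 0 := fun h => c4 (vadd_eq_zero.mp h)
  have h5 : x + z ≠ 0 := fun h => c5 (vadd_eq_zero.mp h)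
  have h6 : y + z ≠ 0 := fun h => c6 (vadd_eq_zero.mp h)
  have h7 : x + y + z ≠ 0 := fun h => c7 (vadd_eq_zero.mp h).symm
  have hinj := psi3_inj c1 c2 c3 h4 h5 h6 h7
  set ψ := psi3 x y z with hψ
  have hfr : finrank (ZMod 2) (LinearMap.range ψ) = 3 := by
    rw [LinearMap.finrank_range_of_inj hinj, finrank_M3]
  have hev := h (LinearMap.range ψ) (by rw [hfr])
  rw [inter_diff_zero h0, even_iff_sum] at hev
  rw [show M.E ∩ (LinearMap.range ψ : Set (V M.dim)) =
    M.E ∩ ((LinearMap.range ψ : Set (V M.dim))) from rfl] at hev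
  rw [show (M.E ∩ (LinearMap.range ψ : Set (V M.dim))) =
    (M.E ∩ (LinearMap.range ψ : Set (V M.dim))) from rfl] at hev
  rw [sum_ind_inter_range ψ hinj] at hev
  rw [Fintype.sum_prod_type] at hev
  simp only [Fintype.sum_prod_type] at hev
  rw [zsum (fun a => _)] at hev
  rw [zsum (fun b => ∑ c : ZMod 2, ind M.E (ψ (0, b, c))),
      zsum (fun b => ∑ c : ZMod 2, ind M.E (ψ (1, b, c)))] at hev
  rw [zsum (fun c => ind M.E (ψ (0, 0, c))), zsum (fun c => ind M.E (ψ (0, 1, c))),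
      zsum (fun c => ind M.E (ψ (1, 0, c))), zsum (fun c => ind M.E (ψ (1, 1, c)))] at hev
  simp only [hψ, psi3_apply, zero_smul, one_smul, zero_add, add_zero] at hev
  rw [ind_of_not_mem h0] at hev
  revert hev
  generalize ind M.E x = a
  generalize ind M.E y = b
  generalize ind M.E z = c
  generalize ind M.E (x + y) = ab
  generalize ind M.E (x + z) = ac
  generalize ind M.E (y + z) = bc
  generalize ind M.E (x + y + z) = abc
  revert a b c ab ac bc abc
  decide

end BB11
namespace BB11

variable {n : ℕ}

open Module Set Finset

lemma quad_of_compl (W : Submodule (ZMod 2) (V n))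
    (hcodim : finrank (ZMod 2) (V n) ≤ finrank (ZMod 2) W + 2) :
    QuadSet ({v : V n | v ≠ 0} \ (W : Set (V n))) := by
  classical
  set E := {v : V n | v ≠ 0} \ (W : Set (V n)) with hE
  have hrel : ∀ v : V n, ind E v = 1 + ind (W : Set (V n)) v := by
    intro v
    by_cases hv : v ∈ W
    · rw [ind_of_mem (show v ∈ (W : Set (V n)) from hv),
        ind_of_not_mem (show v ∉ E from fun hc => hc.2 hv)]
      decide
    · have hv0 : v ≠ 0 := by rintro rfl; exact hv W.zero_mem
      rw [ind_of_mem (show v ∈ E from ⟨hv0, hv⟩),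
        ind_of_not_mem (show v ∉ (W : Set (V n)) from hv)]
      decide
  intro x y z
  set ψ := psi3 x y z with hψ
  have key : ∑ p : ZMod 2 × ZMod 2 × ZMod 2, ind (W : Set (V n)) (ψ p) = 0 := by
    have hs : ∑ p : ZMod 2 × ZMod 2 × ZMod 2, ind (W : Set (V n)) (ψ p) =
        ((Finset.univ.filter fun p : ZMod 2 × ZMod 2 × ZMod 2 => ψ p ∈ W).card : ZMod 2) := by
      rw [← Finset.sum_boole]
      refine Finset.sum_congr rfl (fun p _ => ?_)
      by_cases hp : ψ p ∈ W
      · rw [if_pos hp, ind_of_mem (show ψ p ∈ (W : Set (V n)) from hp)]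
      · rw [if_neg hp, ind_of_not_mem (show ψ p ∉ (W : Set (V n)) from hp)]
    rw [hs]
    have hcard : (Finset.univ.filter fun p : ZMod 2 × ZMod 2 × ZMod 2 => ψ p ∈ W).card
        = Fintype.card (W.comap ψ) := by
      rw [← Fintype.card_subtype]
      exact Fintype.card_congr (Equiv.subtypeEquivRight fun p =>
        (Submodule.mem_comap).symm).symm
    have hrank : 1 ≤ finrank (ZMod 2) (W.comap ψ) := by
      set θ := W.mkQ.comp ψ with hθ
      have hker : LinearMap.ker θ = W.comap ψ := by
        rw [hθ, LinearMap.ker_comp, Submodule.ker_mkQ]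
      have hrn := LinearMap.finrank_range_add_finrank_ker θ
      rw [hker, finrank_M3] at hrn
      have hle : finrank (ZMod 2) (LinearMap.range θ) ≤ finrank (ZMod 2) (V n ⧸ W) :=
        Submodule.finrank_le _
      have hqt := Submodule.finrank_quotient_add_finrank W
      omega
    rw [hcard, card_eq_pow_finrank (K := ZMod 2), ZMod.card]
    have : (((2:ℕ)^(finrank (ZMod 2) (W.comap ψ)) : ℕ) : ZMod 2) = 0 := by
      rw [Nat.cast_pow]
      have h3 : ((2:ℕ) : ZMod 2) = 0 := by decide
      rw [h3, zero_pow (by omega)]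
    exact this
  rw [Fintype.sum_prod_type] at key
  simp only [Fintype.sum_prod_type] at key
  rw [zsum (fun a => _)] at key
  rw [zsum (fun b => ∑ c : ZMod 2, ind (W : Set (V n)) (ψ (0, b, c))),
      zsum (fun b => ∑ c : ZMod 2, ind (W : Set (V n)) (ψ (1, b, c)))] at key
  rw [zsum (fun c => ind (W : Set (V n)) (ψ (0, 0, c))),
      zsum (fun c => ind (W : Set (V n)) (ψ (0, 1, c))),
      zsum (fun c => ind (W : Set (V n)) (ψ (1, 0, c))),
      zsum (fun c => ind (W : Set (V n)) (ψ (1, 1, c)))] at key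
  simp only [hψ, psi3_apply, zero_smul, one_smul, zero_add, add_zero] at key
  rw [ind_of_mem (show (0 : V n) ∈ (W : Set (V n)) from W.zero_mem)] at key
  rw [hrel (x+y+z), hrel x, hrel y, hrel z, hrel (x+y), hrel (x+z), hrel (y+z)]
  revert key
  generalize ind (W : Set (V n)) x = a
  generalize ind (W : Set (V n)) y = b
  generalize ind (W : Set (V n)) z = c
  generalize ind (W : Set (V n)) (x + y) = ab
  generalize ind (W : Set (V n)) (x + z) = ac
  generalize ind (W : Set (V n)) (y + z) = bc
  generalize ind (W : Set (V n)) (x + y + z) = abc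
  revert a b c ab ac bc abc
  decide

lemma bb_quad (M : BinMatroid) (k : ℕ) (hk : k ≤ 2) (hbb : M.IsBoseBurton k) :
    QuadSet M.E := by
  obtain ⟨hkn, W, hfrW, hEeq⟩ := hbb
  rw [hEeq]
  apply quad_of_compl
  rw [Module.finrank_pi, Fintype.card_fin, hfrW]
  omega

lemma iso_refl (M : BinMatroid) : M.Iso M := by
  refine ⟨LinearMap.id, Function.bijective_id, ?_⟩
  rw [show ⇑(LinearMap.id : (Fin M.dim → ZMod 2) →ₗ[ZMod 2] _) = id from rfl, Set.image_id]
  rw [Set.range_id]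
  ext v
  constructor
  · intro hv
    exact ⟨hv, trivial, by rintro (rfl : v = 0); exact M.zero_not_mem hv⟩
  · rintro ⟨hv, _⟩
    exact hv

lemma quad_iso {M N : BinMatroid} (h : M.Iso N) (hq : QuadSet N.E) : QuadSet M.E := by
  obtain ⟨φ, hbij, him⟩ := h
  have hrange : Set.range φ = Set.univ := hbij.2.range_eq
  have hEeq : φ '' N.E = M.E := by
    rw [him, hrange]
    ext v
    constructor
    · rintro ⟨hv, _⟩; exact hv
    · intro hv
      exact ⟨hv, trivial, by rintro (rfl : v = 0); exact M.zero_not_mem hv⟩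
  have hind : ∀ u, ind M.E (φ u) = ind N.E u := by
    intro u
    by_cases hu : u ∈ N.E
    · rw [ind_of_mem hu, ind_of_mem (hEeq ▸ Set.mem_image_of_mem φ hu)]
    · rw [ind_of_not_mem hu, ind_of_not_mem]
      intro hc
      rw [← hEeq] at hc
      obtain ⟨u', hu', he⟩ := hc
      exact hu (hbij.1 he ▸ hu')
  intro x y z
  obtain ⟨u, rfl⟩ := hbij.2 x
  obtain ⟨v, rfl⟩ := hbij.2 y
  obtain ⟨t, rfl⟩ := hbij.2 z
  simp only [← map_add, hind]
  exact hq u v t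

end BB11
namespace BB11

variable {n : ℕ}

open Module Set Finset

lemma coset_step {H₀ H₁ : Submodule (ZMod 2) (V n)} (hle : H₀ ≤ H₁)
    (hfr : finrank (ZMod 2) H₀ + 1 = finrank (ZMod 2) H₁)
    {x y : V n} (hx : x ∈ H₁) (hy : y ∈ H₁) (hx0 : x ∉ H₀) (hy0 : y ∉ H₀) :
    x + y ∈ H₀ := by
  have hxK : x ∈ H₀ ⊔ Submodule.span (ZMod 2) {x} :=
    Submodule.mem_sup_right (Submodule.mem_span_singleton_self x)
  have hKle : H₀ ⊔ Submodule.span (ZMod 2) {x} ≤ H₁ := by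
    refine sup_le hle ?_
    rwa [Submodule.span_singleton_le_iff_mem]
  have hlt : H₀ < H₀ ⊔ Submodule.span (ZMod 2) {x} :=
    lt_of_le_of_ne le_sup_left (fun he => hx0 (he ▸ hxK))
  have hKeq : H₀ ⊔ Submodule.span (ZMod 2) {x} = H₁ := by
    refine Submodule.eq_of_le_of_finrank_le hKle ?_
    have := Submodule.finrank_lt_finrank_of_lt hlt
    omega
  rw [← hKeq] at hy
  rcases Submodule.mem_sup.mp hy with ⟨h', hh', s, hs, rfl⟩
  rcases Submodule.mem_span_singleton.mp hs with ⟨c, rfl⟩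
  rcases z_cases c with rfl | rfl
  · exfalso
    rw [zero_smul, add_zero] at hy0
    exact hy0 hh'
  · rw [one_smul]
    have : x + (h' + x) = h' := by rw [add_comm h' x, vcancel]
    rw [this]
    exact hh'

lemma quad_semidoubling {M M₀ : BinMatroid} (h : M.IsSemidoublingOf M₀)
    (hq : QuadSet M₀.E) : QuadSet M.E := by
  obtain ⟨hdim, φ, hinj, him, H₀, hle, hfr, w, hw0, hwH, hwE, hp0, hp1⟩ := h
  set H₁ := LinearMap.range φ with hH₁
  have h0 : (0 : V M.dim) ∉ M.E := M.zero_not_mem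
  -- indicator transfers along φ
  have hphi : ∀ u, ind M.E (φ u) = ind M₀.E u := by
    intro u
    by_cases hu : u ∈ M₀.E
    · have : φ u ∈ M.E ∩ (Set.range φ \ {0}) := him ▸ Set.mem_image_of_mem φ hu
      rw [ind_of_mem hu, ind_of_mem this.1]
    · rw [ind_of_not_mem hu, ind_of_not_mem]
      intro hE'
      by_cases hu0 : u = 0
      · subst hu0; rw [map_zero] at hE'; exact h0 hE'
      · have hne : φ u ≠ 0 := fun hc => hu0 (hinj (by rw [hc, map_zero]))
        have : φ u ∈ M.E ∩ (Set.range φ \ {0}) := ⟨hE', ⟨u, rfl⟩, hne⟩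
        rw [← him] at this
        obtain ⟨u', hu', he⟩ := this
        exact hu (hinj he ▸ hu')
  have hcube : ∀ a b c : V M.dim, a ∈ H₁ → b ∈ H₁ → c ∈ H₁ →
      ind M.E (a+b+c) = ind M.E a + ind M.E b + ind M.E c
        + ind M.E (a+b) + ind M.E (a+c) + ind M.E (b+c) := by
    rintro _ _ _ ⟨u, rfl⟩ ⟨v, rfl⟩ ⟨t, rfl⟩
    simp only [← map_add, hphi]
    exact hq u v t
  -- the coset function β
  set β : V M.dim → ZMod 2 := fun v => ind M.E v + ind M.E (v + w) with hβ
  have hwne : ∀ x : V M.dim, x ≠ x + w := by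
    intro x hx
    exact hw0 (left_eq_add.mp hx)
  have hβ0 : ∀ x ∈ H₀, β x = 0 := by
    intro x hx
    by_cases hx0 : x = 0
    · subst hx0
      show ind M.E 0 + ind M.E (0 + w) = 0
      rw [zero_add, ind_of_not_mem h0, ind_of_not_mem hwE]
      decide
    · rcases hp0 x ⟨hx, fun hs => hx0 hs⟩ with hc | hc <;>
      · by_cases h1 : x ∈ M.E <;> by_cases h2 : x + w ∈ M.E
        · show ind M.E x + ind M.E (x + w) = 0
          rw [ind_of_mem h1, ind_of_mem h2]; decide
        · exfalso
          have hset : ({x, x+w} : Set (V M.dim)) ∩ M.E = {x} := by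
            ext v
            constructor
            · rintro ⟨hv1, hv2⟩
              rcases hv1 with rfl | rfl
              · rfl
              · exact absurd hv2 h2
            · rintro (rfl : v = x)
              exact ⟨Or.inl rfl, h1⟩
          rw [hset, Set.ncard_singleton] at hc
          omega
        · exfalso
          have hset : ({x, x+w} : Set (V M.dim)) ∩ M.E = {x+w} := by
            ext v
            constructor
            · rintro ⟨hv1, hv2⟩
              rcases hv1 with rfl | rfl
              · exact absurd hv2 h1
              · rfl
            · rintro (rfl : v = x + w)
              exact ⟨Or.inr rfl, h2⟩
          rw [hset, Set.ncard_singleton] at hc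
          omega
        · show ind M.E x + ind M.E (x + w) = 0
          rw [ind_of_not_mem h1, ind_of_not_mem h2]; decide
  have hβ1 : ∀ x, x ∈ H₁ → x ∉ H₀ → β x = 1 := by
    intro x hx hx0
    have hc := hp1 x ⟨hx, hx0⟩
    by_cases h1 : x ∈ M.E <;> by_cases h2 : x + w ∈ M.E
    · exfalso
      have hset : ({x, x+w} : Set (V M.dim)) ∩ M.E = {x, x+w} := by
        refine Set.inter_eq_left.mpr ?_
        rintro v (rfl | rfl)
        · exact h1
        · exact h2
      rw [hset, Set.ncard_pair (hwne x)] at hc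
      omega
    · show ind M.E x + ind M.E (x + w) = 1
      rw [ind_of_mem h1, ind_of_not_mem h2]; decide
    · show ind M.E x + ind M.E (x + w) = 1
      rw [ind_of_not_mem h1, ind_of_mem h2]; decide
    · exfalso
      have hset : ({x, x+w} : Set (V M.dim)) ∩ M.E = ∅ := by
        ext v
        simp only [Set.mem_inter_iff, Set.mem_empty_iff_false, iff_false, not_and]
        rintro (rfl | rfl)
        · exact h1
        · exact h2
      rw [hset, Set.ncard_empty] at hc
      omega
  have hβadd : ∀ x y, x ∈ H₁ → y ∈ H₁ → β (x+y) = β x + β y := by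
    intro x y hx hy
    by_cases hx0 : x ∈ H₀ <;> by_cases hy0 : y ∈ H₀
    · rw [hβ0 _ hx0, hβ0 _ hy0, hβ0 _ (H₀.add_mem hx0 hy0)]; decide
    · have hxy : x + y ∉ H₀ := by
        intro hc
        exact hy0 (by rw [← vcancel x y]; exact H₀.add_mem hx0 hc)
      rw [hβ0 _ hx0, hβ1 _ (H₁.add_mem hx hy) hxy, hβ1 _ hy hy0]; decide
    · have hxy : x + y ∉ H₀ := by
        intro hc
        refine hx0 ?_
        have h2 : y + (x + y) ∈ H₀ := H₀.add_mem hy0 hc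
        rwa [show y + (x + y) = x from by rw [add_comm x y]; exact vcancel y x] at h2
      rw [hβ1 _ hx hx0, hβ1 _ (H₁.add_mem hx hy) hxy, hβ0 _ hy0]; decide
    · rw [hβ1 _ hx hx0, hβ1 _ hy hy0, hβ0 _ (coset_step hle hfr hx hy hx0 hy0)]; decide
  -- dimension bookkeeping and decomposition
  have hfrH₁ : finrank (ZMod 2) H₁ = M₀.dim := by
    rw [hH₁, LinearMap.finrank_range_of_inj hinj, Module.finrank_pi, Fintype.card_fin]
  have hVfr : finrank (ZMod 2) (Fin M.dim → ZMod 2) = M₀.dim + 1 := by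
    rw [Module.finrank_pi, Fintype.card_fin, hdim]
  have hsup : H₁ ⊔ Submodule.span (ZMod 2) {w} = ⊤ := by
    apply Submodule.eq_top_of_finrank_eq
    have hlt : H₁ < H₁ ⊔ Submodule.span (ZMod 2) {w} :=
      lt_of_le_of_ne le_sup_left
        (fun he => hwH (he ▸ Submodule.mem_sup_right (Submodule.mem_span_singleton_self w)))
    have h1 := Submodule.finrank_lt_finrank_of_lt hlt
    have h2 := Submodule.finrank_le (H₁ ⊔ Submodule.span (ZMod 2) {w})
    omega
  have hdecomp : ∀ v : V M.dim, ∃ (x : V M.dim) (a : ZMod 2), x ∈ H₁ ∧ v = x + a • w := by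
    intro v
    have hv : v ∈ H₁ ⊔ Submodule.span (ZMod 2) {w} := by rw [hsup]; trivial
    rcases Submodule.mem_sup.mp hv with ⟨x, hx, s, hs, rfl⟩
    rcases Submodule.mem_span_singleton.mp hs with ⟨c, rfl⟩
    exact ⟨x, c, hx, rfl⟩
  have hval : ∀ (x : V M.dim) (a : ZMod 2), ind M.E (x + a • w) = ind M.E x + a * β x := by
    intro x a
    rcases z_cases a with rfl | rfl
    · rw [zero_smul, add_zero, zero_mul, add_zero]
    · rw [one_smul, one_mul]
      show ind M.E (x + w) = ind M.E x + (ind M.E x + ind M.E (x + w))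
      generalize ind M.E x = p
      generalize ind M.E (x + w) = q
      revert p q; decide
  have hsum2 : ∀ (x y : V M.dim) (a b : ZMod 2),
      (x + a • w) + (y + b • w) = (x + y) + (a + b) • w := by
    intro x y a b
    rw [add_smul]
    abel
  -- the main computation
  intro x y z
  obtain ⟨x₁, a, hx₁, rfl⟩ := hdecomp x
  obtain ⟨y₁, b, hy₁, rfl⟩ := hdecomp y
  obtain ⟨z₁, c, hz₁, rfl⟩ := hdecomp z
  rw [hsum2 x₁ y₁ a b, hsum2 (x₁ + y₁) z₁ (a+b) c, hsum2 x₁ z₁ a c, hsum2 y₁ z₁ b c]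
  rw [hval, hval, hval, hval, hval, hval, hval]
  rw [hβadd x₁ y₁ hx₁ hy₁, hβadd x₁ z₁ hx₁ hz₁, hβadd y₁ z₁ hy₁ hz₁,
    hβadd (x₁ + y₁) z₁ (H₁.add_mem hx₁ hy₁) hz₁, hβadd x₁ y₁ hx₁ hy₁]
  rw [hcube x₁ y₁ z₁ hx₁ hy₁ hz₁]
  have h6 : ∀ a b c P Q R : ZMod 2,
      (a+b+c)*(P+Q+R) = a*P + b*Q + c*R + (a+b)*(P+Q) + (a+c)*(P+R) + (b+c)*(Q+R) := by
    decide
  linear_combination h6 a b c (β x₁) (β y₁) (β z₁)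

end BB11
namespace BB11

open Module Set Finset

/-- The polar form `B(w, ·)` as a linear functional, given that `E` is quadratic. -/
noncomputable def polar {n : ℕ} (E : Set (V n)) (hq : QuadSet E) (h0 : (0:V n) ∉ E)
    (w : V n) : V n →ₗ[ZMod 2] ZMod 2 where
  toFun v := ind E w + ind E v + ind E (w + v)
  map_add' u v := Bf_add hq w u v
  map_smul' c v := by
    simp only [RingHom.id_apply, smul_eq_mul]
    rcases z_cases c with rfl | rfl
    · rw [zero_smul, zero_mul, show w + (0:V n) = w from add_zero w, ind_of_not_mem h0]
      generalize ind E w = p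
      revert p; decide
    · rw [one_smul, one_mul]

/-- The radical of the polar form. -/
def radical {n : ℕ} (E : Set (V n)) (hq : QuadSet E) (h0 : (0:V n) ∉ E) :
    Submodule (ZMod 2) (V n) where
  carrier := {v | ∀ x, ind E x + ind E v + ind E (x + v) = 0}
  add_mem' := by
    intro a b ha hb
    intro x
    have h := Bf_add hq x a b
    rw [ha x, hb x] at h
    rw [h]
    decide
  zero_mem' := by
    intro x
    rw [ind_of_not_mem h0, show x + (0:V n) = x from add_zero x]
    generalize ind E x = p
    revert p; decide
  smul_mem' := by
    intro c v hv
    rcases z_cases c with rfl | rfl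
    · rw [zero_smul]
      intro x
      rw [ind_of_not_mem h0, show x + (0:V n) = x from add_zero x]
      generalize ind E x = p
      revert p; decide
    · rw [one_smul]; exact hv

set_option maxHeartbeats 2000000 in
lemma main : ∀ (n : ℕ) (E : Set (V n)) (h0 : (0:V n) ∉ E), E.Nonempty → QuadSet E →
    ∃ M₀ : BinMatroid, (M₀.IsBoseBurton 1 ∨ M₀.IsBoseBurton 2) ∧
      BinMatroid.ArisesBySemidoublings ⟨n, E, h0⟩ M₀ := by
  intro n
  induction n using Nat.strong_induction_on with
  | _ n IH =>
  intro E h0 hne hq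
  obtain ⟨e, he⟩ := hne
  have he0 : e ≠ 0 := fun hc => h0 (hc ▸ he)
  by_cases hP : ∃ w : V n, w ≠ 0 ∧ w ∉ E ∧ ∃ v, ind E w + ind E v + ind E (w + v) = 1
  · -- CASE 1: semidoubling descent
    obtain ⟨w, hw0, hwE, v₀, hBv₀⟩ := hP
    have hn1 : 1 ≤ n := by
      rcases Nat.eq_zero_or_pos n with rfl | h
      · exact absurd (Subsingleton.elim w 0) hw0
      · exact h
    have hwse : w ∉ Submodule.span (ZMod 2) {e} := by
      intro hc
      rcases Submodule.mem_span_singleton.mp hc with ⟨c, rfl⟩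
      rcases z_cases c with rfl | rfl
      · rw [zero_smul] at hw0; exact hw0 rfl
      · rw [one_smul] at hwE; exact hwE he
    have hqw : (Submodule.span (ZMod 2) {e}).mkQ w ≠ 0 := by
      rw [Submodule.mkQ_apply, ne_eq, Submodule.Quotient.mk_eq_zero]
      exact hwse
    obtain ⟨μ, hμ⟩ : ∃ μ : Module.Dual (ZMod 2) (V n ⧸ Submodule.span (ZMod 2) {e}),
        μ ((Submodule.span (ZMod 2) {e}).mkQ w) ≠ 0 := by
      by_contra hc
      push_neg at hc
      exact hqw ((Module.forall_dual_apply_eq_zero_iff (ZMod 2) _).mp hc)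
    set lam := μ ∘ₗ (Submodule.span (ZMod 2) {e}).mkQ with hlam
    have hlw : lam w = 1 := z_ne _ hμ
    have hle' : lam e = 0 := by
      show μ ((Submodule.span (ZMod 2) {e}).mkQ e) = 0
      rw [Submodule.mkQ_apply, (Submodule.Quotient.mk_eq_zero _).mpr
        (Submodule.mem_span_singleton_self e), map_zero]
    set H₁ := LinearMap.ker lam with hH₁
    have hwH : w ∉ H₁ := by
      intro hc
      rw [hH₁, LinearMap.mem_ker, hlw] at hc
      exact absurd hc (by decide)
    have heH : e ∈ H₁ := by rw [hH₁, LinearMap.mem_ker]; exact hle'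
    have hfrH₁ : finrank (ZMod 2) H₁ = n - 1 := by
      have hr : LinearMap.range lam = ⊤ := by
        rw [LinearMap.range_eq_top]
        intro c
        exact ⟨c • w, by rw [map_smul, hlw, smul_eq_mul, mul_one]⟩
      have hrn := LinearMap.finrank_range_add_finrank_ker lam
      rw [hr, finrank_top, Module.finrank_self, Module.finrank_pi, Fintype.card_fin] at hrn
      have hrn2 : 1 + finrank (ZMod 2) H₁ = n := by rw [hH₁]; exact hrn
      omega
    set Bw := polar E hq h0 w with hBw
    have hBwv₀ : Bw v₀ = 1 := hBv₀
    have hBww : Bw w = 0 := by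
      show ind E w + ind E w + ind E (w + w) = 0
      rw [show w + w = 0 from vv w, ind_of_not_mem h0, ind_of_not_mem hwE]
      decide
    have hBu : ∃ u, u ∈ H₁ ∧ Bw u = 1 := by
      by_contra hc
      push_neg at hc
      have hH₁le : H₁ ≤ LinearMap.ker Bw := by
        intro u hu
        rcases z_cases (Bw u) with h | h
        · exact LinearMap.mem_ker.mpr h
        · exact absurd h (hc u hu)
      have hBr : LinearMap.range Bw = ⊤ := by
        rw [LinearMap.range_eq_top]
        intro c
        exact ⟨c • v₀, by rw [map_smul, hBwv₀, smul_eq_mul, mul_one]⟩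
      have hrn := LinearMap.finrank_range_add_finrank_ker Bw
      rw [hBr, finrank_top, Module.finrank_self, Module.finrank_pi, Fintype.card_fin] at hrn
      have heq := Submodule.eq_of_le_of_finrank_le hH₁le (by omega)
      refine hwH ?_
      rw [heq]
      exact LinearMap.mem_ker.mpr hBww
    obtain ⟨u₁, hu₁H, hBu₁⟩ := hBu
    set H₀ := H₁ ⊓ LinearMap.ker Bw with hH₀
    have hH₀le : H₀ ≤ H₁ := inf_le_left
    have hfrH₀ : finrank (ZMod 2) H₀ + 1 = finrank (ZMod 2) H₁ := by
      set Br := Bw.comp H₁.subtype with hBrdef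
      have hkerBr : LinearMap.ker Br = Submodule.comap H₁.subtype (LinearMap.ker Bw) :=
        LinearMap.ker_comp _ _
      have hmap : Submodule.map H₁.subtype (LinearMap.ker Br) = H₀ := by
        rw [hkerBr, Submodule.map_comap_subtype]
      have hfin : finrank (ZMod 2) (LinearMap.ker Br) = finrank (ZMod 2) H₀ := by
        rw [← hmap]
        exact (Submodule.equivMapOfInjective H₁.subtype H₁.injective_subtype _).finrank_eq
      have hrr : LinearMap.range Br = ⊤ := by
        rw [LinearMap.range_eq_top]
        intro c
        refine ⟨c • ⟨u₁, hu₁H⟩, ?_⟩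
        rw [map_smul]
        rw [show Br ⟨u₁, hu₁H⟩ = Bw u₁ from rfl, hBu₁, smul_eq_mul, mul_one]
      have hrn := LinearMap.finrank_range_add_finrank_ker Br
      rw [hrr, finrank_top, Module.finrank_self, hfin] at hrn
      omega
    let b : Basis (Fin (n-1)) (ZMod 2) H₁ :=
      (Module.finBasis (ZMod 2) H₁).reindex (finCongr hfrH₁)
    set φ := H₁.subtype ∘ₗ b.equivFun.symm.toLinearMap with hφ
    have hφinj : Function.Injective φ := H₁.injective_subtype.comp b.equivFun.symm.injective
    have hφrange : LinearMap.range φ = H₁ := by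
      rw [hφ, LinearMap.range_comp, LinearEquiv.range, Submodule.map_top,
        Submodule.range_subtype]
    set E₀ := φ ⁻¹' E with hE₀def
    have h00 : (0 : V (n-1)) ∉ E₀ := by
      intro hc
      rw [hE₀def, Set.mem_preimage, map_zero] at hc
      exact h0 hc
    have hindE₀ : ∀ u, ind E₀ u = ind E (φ u) := by
      intro u
      by_cases hu : u ∈ E₀
      · rw [ind_of_mem hu, ind_of_mem (show φ u ∈ E from hu)]
      · rw [ind_of_not_mem hu, ind_of_not_mem (show φ u ∉ E from hu)]
    have hq₀ : QuadSet E₀ := by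
      intro a b' c
      simp only [hindE₀, map_add]
      exact hq _ _ _
    have hE₀ne : E₀.Nonempty := by
      have heH' : e ∈ LinearMap.range φ := by rw [hφrange]; exact heH
      obtain ⟨u, hu⟩ := heH'
      exact ⟨u, by rw [hE₀def, Set.mem_preimage, hu]; exact he⟩
    obtain ⟨M₀, hBB, M'', hchain, hiso⟩ := IH (n-1) (by omega) E₀ h00 hE₀ne hq₀
    obtain ⟨θ, hθbij, hθim⟩ := hiso
    have hdim'' : M''.dim = n - 1 := by
      have h1 : finrank (ZMod 2) (Fin M''.dim → ZMod 2) =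
          finrank (ZMod 2) (Fin (n-1) → ZMod 2) :=
        (LinearEquiv.ofBijective θ hθbij).finrank_eq
      rwa [Module.finrank_pi, Module.finrank_pi, Fintype.card_fin, Fintype.card_fin] at h1
    have hθrange : Set.range ⇑θ = Set.univ := hθbij.2.range_eq
    have hθE : ⇑θ '' M''.E = E₀ := by
      rw [hθim, hθrange]
      ext v
      constructor
      · rintro ⟨hv, _⟩; exact hv
      · intro hv; exact ⟨hv, trivial, by rintro (rfl : v = 0); exact h00 hv⟩
    set ψ : (Fin M''.dim → ZMod 2) →ₗ[ZMod 2] V n := φ ∘ₗ θ with hψdef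
    have hψinj : Function.Injective ψ := hφinj.comp hθbij.1
    have hψrange : LinearMap.range ψ = H₁ := by
      rw [hψdef, LinearMap.range_comp, LinearMap.range_eq_top.mpr hθbij.2,
        Submodule.map_top, hφrange]
    have hψimage : ⇑ψ '' M''.E = E ∩ (Set.range ⇑ψ \ {0}) := by
      have h1 : ⇑ψ '' M''.E = ⇑φ '' (⇑θ '' M''.E) := by
        rw [hψdef]
        rw [show ⇑(φ ∘ₗ θ) = ⇑φ ∘ ⇑θ from rfl, Set.image_comp]
      have h3 : Set.range ⇑ψ = Set.range ⇑φ := by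
        rw [hψdef]
        rw [show ⇑(φ ∘ₗ θ) = ⇑φ ∘ ⇑θ from rfl, Set.range_comp, hθrange, Set.image_univ]
      rw [h1, hθE, hE₀def, Set.image_preimage_eq_inter_range, h3, inter_diff_zero h0]
    have hstep : BinMatroid.IsSemidoublingOf ⟨n, E, h0⟩ M'' := by
      refine ⟨by show n = M''.dim + 1; omega, ψ, hψinj, hψimage, ?_⟩
      rw [show LinearMap.range ψ = H₁ from hψrange]
      refine ⟨H₀, hH₀le, hfrH₀, w, hw0, hwH, hwE, ?_, ?_⟩
      · intro x hx
        have hxH₀ : x ∈ H₀ := hx.1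
        have hBx : Bw x = 0 := LinearMap.mem_ker.mp (Submodule.mem_inf.mp hxH₀).2
        have hparity : ind E (x + w) = ind E x := by
          have h1 : ind E w + ind E x + ind E (w + x) = 0 := hBx
          rw [ind_of_not_mem hwE, show w + x = x + w from add_comm w x] at h1
          revert h1
          generalize ind E x = p
          generalize ind E (x + w) = q
          revert p q; decide
        by_cases hxE : x ∈ E
        · right
          have hxwE : x + w ∈ E := mem_of_ind (by rw [hparity, ind_of_mem hxE])
          have hset : ({x, x+w} : Set (V n)) ∩ E = {x, x+w} :=
            Set.inter_eq_left.mpr (by rintro v (rfl | rfl); exacts [hxE, hxwE])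
          rw [hset, Set.ncard_pair (fun hc => hw0 (left_eq_add.mp hc))]
        · left
          have hxwE : x + w ∉ E := by
            intro hc
            rw [ind_of_mem hc, ind_of_not_mem hxE] at hparity
            exact absurd hparity (by decide)
          have hset : ({x, x+w} : Set (V n)) ∩ E = ∅ := by
            ext v
            simp only [Set.mem_inter_iff, Set.mem_empty_iff_false, iff_false, not_and]
            rintro (rfl | rfl)
            exacts [hxE, hxwE]
          rw [hset, Set.ncard_empty]
      · intro x hx
        have hxH₁ : x ∈ H₁ := hx.1
        have hxH₀ : x ∉ H₀ := hx.2
        have hBx : Bw x = 1 := by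
          rcases z_cases (Bw x) with hc | hc
          · exact absurd (Submodule.mem_inf.mpr ⟨hxH₁, LinearMap.mem_ker.mpr hc⟩) hxH₀
          · exact hc
        have hparity : ind E (x + w) = ind E x + 1 := by
          have h1 : ind E w + ind E x + ind E (w + x) = 1 := hBx
          rw [ind_of_not_mem hwE, show w + x = x + w from add_comm w x] at h1
          revert h1
          generalize ind E x = p
          generalize ind E (x + w) = q
          revert p q; decide
        by_cases hxE : x ∈ E
        · have hxwE : x + w ∉ E := by
            intro hc
            rw [ind_of_mem hc, ind_of_mem hxE] at hparity
            exact absurd hparity (by decide)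
          have hset : ({x, x+w} : Set (V n)) ∩ E = {x} := by
            ext v
            constructor
            · rintro ⟨(rfl | rfl), hv2⟩
              · rfl
              · exact absurd hv2 hxwE
            · rintro (rfl : v = x); exact ⟨Or.inl rfl, hxE⟩
          rw [hset, Set.ncard_singleton]
        · have hxwE : x + w ∈ E := by
            refine mem_of_ind ?_
            rw [hparity, ind_of_not_mem hxE, zero_add]
          have hset : ({x, x+w} : Set (V n)) ∩ E = {x+w} := by
            ext v
            constructor
            · rintro ⟨(rfl | rfl), hv2⟩
              · exact absurd hv2 hxE
              · rfl
            · rintro (rfl : v = x + w); exact ⟨Or.inr rfl, hxwE⟩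
          rw [hset, Set.ncard_singleton]
    exact ⟨M₀, hBB, ⟨n, E, h0⟩, Relation.ReflTransGen.tail hchain hstep, iso_refl _⟩
  · -- CASE 2: E is itself Bose–Burton
    push_neg at hP
    have hBzero : ∀ v, v ∉ E → ∀ x, ind E v + ind E x + ind E (v + x) = 0 := by
      intro v hvE x
      by_cases hv0 : v = 0
      · subst hv0
        rw [ind_of_not_mem h0, show (0:V n) + x = x from zero_add x]
        generalize ind E x = p
        revert p; decide
      · have hne1 := hP v hv0 hvE x
        rcases z_cases (ind E v + ind E x + ind E (v + x)) with h | h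
        · exact h
        · exact absurd h hne1
    obtain ⟨R, hRmem⟩ : ∃ R : Submodule (ZMod 2) (V n),
        ∀ v, v ∈ R ↔ ∀ x, ind E x + ind E v + ind E (x + v) = 0 :=
      ⟨radical E hq h0, fun v => Iff.rfl⟩
    have hnotR : ∀ v, v ∉ R → v ≠ 0 ∧ v ∈ E := by
      intro v hv
      have hv0 : v ≠ 0 := fun hc => hv (hc ▸ R.zero_mem)
      refine ⟨hv0, ?_⟩
      by_contra hvE
      refine hv ((hRmem v).mpr (fun x => ?_))
      have hb := hBzero v hvE x
      rw [show x + v = v + x from add_comm x v]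
      revert hb
      generalize ind E v = p
      generalize ind E x = q
      generalize ind E (v + x) = r
      revert p q r; decide
    by_cases hxy : ∃ x y : V n, x ∉ R ∧ y ∉ R ∧ x + y ∉ R
    · -- R has codimension 2 : Bose–Burton of order 2
      obtain ⟨x, y, hxR, hyR, hxyR⟩ := hxy
      have hfull : ∀ v, v ∉ R → ind E v = 1 := fun v hv => ind_of_mem (hnotR v hv).2
      have hfR : ∀ r ∈ R, r ∉ E := by
        intro r hr hrE
        have hxr : x + r ∉ R := fun hc => hxR (by
          have h2 := R.add_mem hc hr
          rwa [vxyy] at h2)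
        have hyr : y + r ∉ R := fun hc => hyR (by
          have h2 := R.add_mem hc hr
          rwa [vxyy] at h2)
        have hxyr : x + y + r ∉ R := fun hc => hxyR (by
          have h2 := R.add_mem hc hr
          rwa [vxyy] at h2)
        have h1 := hq x y r
        rw [hfull x hxR, hfull y hyR, hfull _ hxyR, hfull _ hxr, hfull _ hyr,
          hfull _ hxyr, ind_of_mem hrE] at h1
        exact absurd h1 (by decide)
      have htrip : ∀ u v t : V n, u ∉ R → v ∉ R → t ∉ R → u + v ∉ R → u + t ∉ R →
          v + t ∉ R → u + v + t ∉ R → False := by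
        intro u v t h1 h2 h3 h4 h5 h6 h7
        have h := hq u v t
        rw [hfull u h1, hfull v h2, hfull t h3, hfull _ h4, hfull _ h5, hfull _ h6,
          hfull _ h7] at h
        exact absurd h (by decide)
      have hEeq : E = {v : V n | v ≠ 0} \ (R : Set (V n)) := by
        ext v
        constructor
        · intro hv
          exact ⟨fun hc => h0 (hc ▸ hv), fun hR' => hfR v hR' hv⟩
        · rintro ⟨hv0, hvR⟩
          exact (hnotR v hvR).2
      have hxT : x ∈ (R ⊔ Submodule.span (ZMod 2) {x}) ⊔ Submodule.span (ZMod 2) {y} :=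
        Submodule.mem_sup_left (Submodule.mem_sup_right (Submodule.mem_span_singleton_self x))
      have hyT : y ∈ (R ⊔ Submodule.span (ZMod 2) {x}) ⊔ Submodule.span (ZMod 2) {y} :=
        Submodule.mem_sup_right (Submodule.mem_span_singleton_self y)
      have hRT : ∀ v ∈ R, v ∈ (R ⊔ Submodule.span (ZMod 2) {x}) ⊔ Submodule.span (ZMod 2) {y} :=
        fun v hv => Submodule.mem_sup_left (Submodule.mem_sup_left hv)
      have hsup : (R ⊔ Submodule.span (ZMod 2) {x}) ⊔ Submodule.span (ZMod 2) {y} = ⊤ := by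
        rw [Submodule.eq_top_iff']
        intro v
        by_cases hv : v ∈ R
        · exact hRT v hv
        by_cases hvx : v + x ∈ R
        · rw [show v = (v + x) + x from (vxyy v x).symm]
          exact Submodule.add_mem _ (hRT _ hvx) hxT
        by_cases hvy : v + y ∈ R
        · rw [show v = (v + y) + y from (vxyy v y).symm]
          exact Submodule.add_mem _ (hRT _ hvy) hyT
        by_cases hvxy : v + (x + y) ∈ R
        · have hvv : v = v + (x + y) + x + y := by
            rw [add_assoc (v + (x + y)) x y, vxyy]
          rw [hvv]
          exact Submodule.add_mem _ (Submodule.add_mem _ (hRT _ hvxy) hxT) hyT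
        · exfalso
          refine htrip x y v hxR hyR hv hxyR ?_ ?_ ?_
          · intro hc; exact hvx (by rwa [add_comm] at hc)
          · intro hc; exact hvy (by rwa [add_comm] at hc)
          · intro hc; exact hvxy (by rwa [add_comm] at hc)
      have hfrle : n ≤ finrank (ZMod 2) R + 2 := by
        have h1 : finrank (ZMod 2)
            (((R ⊔ Submodule.span (ZMod 2) {x}) ⊔ Submodule.span (ZMod 2) {y} :
              Submodule (ZMod 2) (V n))) = n := by
          rw [hsup, finrank_top, Module.finrank_pi, Fintype.card_fin]
        have h2 := Submodule.finrank_sup_add_finrank_inf_eq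
          (R ⊔ Submodule.span (ZMod 2) {x}) (Submodule.span (ZMod 2) {y})
        have h3 := Submodule.finrank_sup_add_finrank_inf_eq R (Submodule.span (ZMod 2) {x})
        have h4 : finrank (ZMod 2) (Submodule.span (ZMod 2) {x}) = 1 :=
          finrank_span_singleton (hnotR x hxR).1
        have h5 : finrank (ZMod 2) (Submodule.span (ZMod 2) {y}) = 1 :=
          finrank_span_singleton (hnotR y hyR).1
        omega
      have hq2 : 2 ≤ finrank (ZMod 2) (V n ⧸ R) := by
        by_contra hc
        push_neg at hc
        have hqx : R.mkQ x ≠ 0 := by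
          rw [Submodule.mkQ_apply, ne_eq, Submodule.Quotient.mk_eq_zero]; exact hxR
        have h1 : finrank (ZMod 2) (Submodule.span (ZMod 2) {R.mkQ x}) = 1 :=
          finrank_span_singleton hqx
        have h2 : Submodule.span (ZMod 2) {R.mkQ x} = ⊤ := by
          apply Submodule.eq_top_of_finrank_eq
          have h3 := Submodule.finrank_le (Submodule.span (ZMod 2) {R.mkQ x})
          omega
        have hy' : R.mkQ y ∈ Submodule.span (ZMod 2) {R.mkQ x} := by rw [h2]; trivial
        rcases Submodule.mem_span_singleton.mp hy' with ⟨c, hcc⟩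
        rcases z_cases c with rfl | rfl
        · rw [zero_smul] at hcc
          refine hyR ?_
          have h4 : R.mkQ y = 0 := hcc.symm
          rwa [Submodule.mkQ_apply, Submodule.Quotient.mk_eq_zero] at h4
        · rw [one_smul] at hcc
          refine hxyR ?_
          have h4 : R.mkQ (x + y) = 0 := by
            rw [map_add, ← hcc, ← map_add, vv x, map_zero]
          rwa [Submodule.mkQ_apply, Submodule.Quotient.mk_eq_zero] at h4
      have hfrR : finrank (ZMod 2) R = n - 2 ∧ 2 ≤ n := by
        have h1 := Submodule.finrank_quotient_add_finrank R
        rw [Module.finrank_pi, Fintype.card_fin] at h1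
        omega
      exact ⟨⟨n, E, h0⟩, Or.inr ⟨hfrR.2, R, hfrR.1, hEeq⟩,
        ⟨n, E, h0⟩, Relation.ReflTransGen.refl, iso_refl _⟩
    · -- R = ⊤ : linear case, Bose–Burton of order 1
      push_neg at hxy
      have hB0 : ∀ v x : V n, ind E x + ind E v + ind E (x + v) = 0 := by
        intro v x
        by_cases hv : v ∈ R
        · exact (hRmem v).mp hv x
        · by_cases hx : x ∈ R
          · have hb := (hRmem x).mp hx v
            rw [show x + v = v + x from add_comm x v]
            revert hb
            generalize ind E v = p
            generalize ind E x = q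
            generalize ind E (v + x) = r
            revert p q r; decide
          · have hxv : x + v ∈ R := hxy x v hx hv
            have h2 : v + (x + v) = x := by rw [add_comm x v, vcancel]
            have h3 := (hRmem (x + v)).mp hxv v
            rw [h2] at h3
            revert h3
            generalize ind E v = p
            generalize ind E x = q
            generalize ind E (x + v) = r
            revert p q r; decide
      have hadd : ∀ u v : V n, ind E (u + v) = ind E u + ind E v := by
        intro u v
        have hb := hB0 v u
        revert hb
        generalize ind E u = p
        generalize ind E v = q
        generalize ind E (u + v) = r
        revert p q r; decide
      set l : V n →ₗ[ZMod 2] ZMod 2 := {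
        toFun := ind E,
        map_add' := hadd,
        map_smul' := by
          intro c v
          simp only [RingHom.id_apply, smul_eq_mul]
          rcases z_cases c with rfl | rfl
          · rw [zero_smul, ind_of_not_mem h0, zero_mul]
          · rw [one_smul, one_mul] } with hldef
      have hle : l e = 1 := ind_of_mem he
      have hn1 : 1 ≤ n := by
        rcases Nat.eq_zero_or_pos n with rfl | h
        · exact absurd (Subsingleton.elim e 0) he0
        · exact h
      have hker : finrank (ZMod 2) (LinearMap.ker l) = n - 1 := by
        have hr : LinearMap.range l = ⊤ := by
          rw [LinearMap.range_eq_top]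
          intro c
          exact ⟨c • e, by rw [map_smul, hle, smul_eq_mul, mul_one]⟩
        have hrn := LinearMap.finrank_range_add_finrank_ker l
        rw [hr, finrank_top, Module.finrank_self, Module.finrank_pi, Fintype.card_fin] at hrn
        omega
      have hEeq : E = {v : V n | v ≠ 0} \ (LinearMap.ker l : Set (V n)) := by
        ext v
        constructor
        · intro hv
          refine ⟨fun hc => h0 (hc ▸ hv), fun hk => ?_⟩
          have hk0 : l v = 0 := hk
          rw [show l v = ind E v from rfl, ind_of_mem hv] at hk0
          exact absurd hk0 (by decide)
        · rintro ⟨hv0, hk⟩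
          refine mem_of_ind_ne (fun hc => hk ?_)
          exact LinearMap.mem_ker.mpr hc
      exact ⟨⟨n, E, h0⟩, Or.inl ⟨hn1, LinearMap.ker l, hker, hEeq⟩,
        ⟨n, E, h0⟩, Relation.ReflTransGen.refl, iso_refl _⟩

end BB11
/-- A nonempty matroid `M` belongs to `ℰ₃` if and only if `M` arises
from a Bose–Burton geometry of order 1 or 2 by a sequence of semidoublings. -/
theorem stmt11 (M : BinMatroid) (hne : M.E.Nonempty) :
    M.MemE 3 ↔ ∃ M₀ : BinMatroid,
      (M₀.IsBoseBurton 1 ∨ M₀.IsBoseBurton 2) ∧ M.ArisesBySemidoublings M₀ := by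
  constructor
  · intro hM
    have hq := BB11.memE_quad M hM
    obtain ⟨M₀, hBB, hart⟩ := BB11.main M.dim M.E M.zero_not_mem hne hq
    exact ⟨M₀, hBB, hart⟩
  · rintro ⟨M₀, hBB, M', hchain, hiso⟩
    have hq0 : BB11.QuadSet M₀.E := by
      rcases hBB with h | h
      · exact BB11.bb_quad M₀ 1 (by omega) h
      · exact BB11.bb_quad M₀ 2 (by omega) h
    have hq' : ∀ N : BinMatroid,
        Relation.ReflTransGen (fun A B => BinMatroid.IsSemidoublingOf B A) M₀ N →
        BB11.QuadSet N.E := by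
      intro N hch
      induction hch with
      | refl => exact hq0
      | tail _ hsd ih => exact BB11.quad_semidoubling hsd ih
    exact BB11.quad_memE M (BB11.quad_iso hiso (hq' M' hchain))
end

section
/- Let M = (E, G) be a matroid of dimension n+1, let G₀ be a hyperplane of G, and suppose M is the semidoubling of M₀ = (E ∩ G₀, G₀) with respect to a hyperplane H₀ of G₀. Then χ(M) = χ(M|H₀) + 1. -/
/-! With `w` the semidoubling vector, `x + w ∈ E ↔ x ∈ E` for `x ∈ H₀ \ {0}` and `w ∉ E`, so a
flat `W ≤ H₀` avoiding `E` extends to the flat `W ⊔ ⟨w⟩` avoiding `E`; hence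
`χ(M) ≤ χ(M|H₀) + 1`. Conversely, if a flat `U` avoids `E`, so does `(U ⊔ ⟨w⟩) ⊓ H₀`, of
dimension at least `dim U - 1`: if `w ∉ U` this is a dimension count against the
codimension-two `H₀`; if `w ∈ U`, then `U ≤ H₀ ⊔ ⟨w⟩` because for `x ∈ G₀ \ H₀` one of `x`,
`x + w` lies in `E`.
-/

open Module Submodule

theorem Set.mem_iff_mem_of_ncard_pair_inter_ne_one {α : Type*} {E : Set α} {a b : α}
    (h : (({a, b} : Set α) ∩ E).ncard ≠ 1) : a ∈ E ↔ b ∈ E := by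
  by_cases hab : a = b
  · rw [hab]
  by_cases ha : a ∈ E <;> by_cases hb : b ∈ E <;>
    simp_all [Set.insert_inter_of_mem, Set.insert_inter_of_notMem]

theorem Set.mem_or_mem_of_ncard_pair_inter_ne_zero {α : Type*} {E : Set α} {a b : α}
    (h : (({a, b} : Set α) ∩ E).ncard ≠ 0) : a ∈ E ∨ b ∈ E := by
  by_contra! hab
  simp_all [Set.insert_inter_of_notMem]

theorem Submodule.finrank_add_finrank_le_finrank_inf_add {K V : Type*} [DivisionRing K]
    [AddCommGroup V] [Module K V] [FiniteDimensional K V] {A B C : Submodule K V}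
    (h : A ⊔ B ≤ C) : finrank K A + finrank K B ≤ finrank K ↥(A ⊓ B) + finrank K C := by
  rw [← finrank_sup_add_finrank_inf_eq, add_comm]
  exact Nat.add_le_add_left (finrank_mono h) _

section
variable {V : Type*} [AddCommGroup V] [Module (ZMod 2) V]

theorem mem_span_singleton_iff_eq_zero_or_eq {x w : V} :
    x ∈ span (ZMod 2) {w} ↔ x = 0 ∨ x = w := by
  constructor
  · intro h
    obtain ⟨a, rfl⟩ := mem_span_singleton.mp h
    rcases (by decide : ∀ a : ZMod 2, a = 0 ∨ a = 1) a with rfl | rfl <;> simp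
  · rintro (rfl | rfl)
    exacts [zero_mem _, mem_span_singleton_self _]

/-- The conditions of `BinMatroid.IsSemidoublingWrt E G₀ H₀` for the vector `w`, over any
`𝔽₂`-space, with the counts `|{x, x + w} ∩ E|` read as membership statements. -/
structure IsSemidoublingBy (E : Set V) (G₀ H₀ : Submodule (ZMod 2) V) (w : V) : Prop where
  le : H₀ ≤ G₀
  finrank_add_one : finrank (ZMod 2) H₀ + 1 = finrank (ZMod 2) G₀
  notMem_submodule : w ∉ G₀
  notMem_set : w ∉ E
  add_mem_iff : ∀ x ∈ H₀, x ≠ 0 → (x + w ∈ E ↔ x ∈ E)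
  mem_or_add_mem : ∀ x ∈ G₀, x ∉ H₀ → x ∈ E ∨ x + w ∈ E

namespace IsSemidoublingBy

variable {E : Set V} {G₀ H₀ U W : Submodule (ZMod 2) V} {w : V}

theorem notMem_of_le (h : IsSemidoublingBy E G₀ H₀ w) (hW : W ≤ H₀) : w ∉ W :=
  fun hw => h.notMem_submodule (h.le (hW hw))

theorem disjoint_sup_span_singleton (h : IsSemidoublingBy E G₀ H₀ w) (hW : W ≤ H₀)
    (hWE : Disjoint ((W : Set V) \ {0}) E) :
    Disjoint (((W ⊔ span (ZMod 2) {w} : Submodule (ZMod 2) V) : Set V) \ {0}) E := by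
  rw [Set.disjoint_left] at hWE ⊢
  rintro _ ⟨hx, hx0⟩
  obtain ⟨u, hu, s, hs, rfl⟩ := mem_sup.mp hx
  rcases mem_span_singleton_iff_eq_zero_or_eq.mp hs with rfl | rfl
  · rw [add_zero] at hx0 ⊢
    exact hWE ⟨hu, hx0⟩
  by_cases hu0 : u = 0
  · rw [hu0, zero_add]
    exact h.notMem_set
  · rw [h.add_mem_iff u (hW hu) hu0]
    exact hWE ⟨hu, hu0⟩

theorem disjoint_sup_span_singleton_inf (h : IsSemidoublingBy E G₀ H₀ w)
    (hUE : Disjoint ((U : Set V) \ {0}) E) :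
    Disjoint ((((U ⊔ span (ZMod 2) {w}) ⊓ H₀ : Submodule (ZMod 2) V) : Set V) \ {0}) E := by
  rw [Set.disjoint_left] at hUE ⊢
  rintro _ ⟨⟨hx, hxH⟩, hx0⟩
  obtain ⟨u, hu, s, hs, rfl⟩ := mem_sup.mp hx
  rcases mem_span_singleton_iff_eq_zero_or_eq.mp hs with rfl | rfl
  · rw [add_zero] at hx0 ⊢
    exact hUE ⟨hu, hx0⟩
  have hu0 : u ≠ 0 := by
    rintro rfl
    exact h.notMem_of_le le_rfl (by simpa using hxH)
  rw [← h.add_mem_iff _ hxH hx0, add_assoc, ZModModule.add_self, add_zero]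
  exact hUE ⟨hu, hu0⟩

theorem le_sup_span_singleton_of_mem (h : IsSemidoublingBy E G₀ H₀ w)
    (htop : G₀ ⊔ span (ZMod 2) {w} = ⊤) (hUE : Disjoint ((U : Set V) \ {0}) E) (hwU : w ∈ U) :
    U ≤ H₀ ⊔ span (ZMod 2) {w} := by
  intro y hy
  obtain ⟨g, hg, s, hs, rfl⟩ := mem_sup.mp (htop ▸ mem_top : y ∈ G₀ ⊔ span (ZMod 2) {w})
  refine mem_sup.mpr ⟨g, ?_, s, hs, rfl⟩
  by_contra hgH
  have hsU : s ∈ U := (span_singleton_le_iff_mem w U).mpr hwU hs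
  have hgU : g ∈ U := by simpa using U.sub_mem hy hsU
  have hg0 : g ≠ 0 := fun hg0 => hgH (hg0 ▸ H₀.zero_mem)
  have hgw0 : g + w ≠ 0 := fun hgw =>
    h.notMem_submodule (eq_of_sub_eq_zero (ZModModule.sub_eq_add g w ▸ hgw) ▸ hg)
  rw [Set.disjoint_left] at hUE
  rcases h.mem_or_add_mem g hg hgH with hE | hE
  · exact hUE ⟨hgU, hg0⟩ hE
  · exact hUE ⟨U.add_mem hgU hwU, hgw0⟩ hE

theorem exists_le_disjoint [FiniteDimensional (ZMod 2) V] (h : IsSemidoublingBy E G₀ H₀ w)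
    (hG : finrank (ZMod 2) G₀ + 1 = finrank (ZMod 2) V) (hUE : Disjoint ((U : Set V) \ {0}) E) :
    ∃ W ≤ H₀, finrank (ZMod 2) U ≤ finrank (ZMod 2) W + 1 ∧ Disjoint ((W : Set V) \ {0}) E := by
  refine ⟨(U ⊔ span (ZMod 2) {w}) ⊓ H₀, inf_le_right, ?_, h.disjoint_sup_span_singleton_inf hUE⟩
  have hH := h.finrank_add_one
  by_cases hwU : w ∈ U
  · have hU : U ⊔ span (ZMod 2) {w} = U :=
      sup_eq_left.mpr ((span_singleton_le_iff_mem w U).mpr hwU)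
    have htop : G₀ ⊔ span (ZMod 2) {w} = ⊤ :=
      eq_top_of_finrank_eq (by rw [finrank_sup_span_singleton h.notMem_submodule, hG])
    have hle : U ⊔ H₀ ≤ H₀ ⊔ span (ZMod 2) {w} :=
      sup_le (h.le_sup_span_singleton_of_mem htop hUE hwU) le_sup_left
    have := finrank_add_finrank_le_finrank_inf_add hle
    rw [finrank_sup_span_singleton (h.notMem_of_le le_rfl)] at this
    rw [hU]
    omega
  · have := finrank_add_finrank_le_finrank_inf_add (le_top : U ⊔ span (ZMod 2) {w} ⊔ H₀ ≤ ⊤)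
    rw [finrank_sup_span_singleton hwU, finrank_top] at this
    omega

end IsSemidoublingBy

end

namespace BinMatroid

variable {n : ℕ} {E : Set (Fin n → ZMod 2)} {F W H₁ H₀ : Submodule (ZMod 2) (Fin n → ZMod 2)}

theorem IsSemidoublingWrt.exists_isSemidoublingBy (h : IsSemidoublingWrt E H₁ H₀) :
    ∃ w, IsSemidoublingBy E H₁ H₀ w := by
  obtain ⟨hle, hrk, w, -, hwH, hwE, hpair, hsingle⟩ := h
  refine ⟨w, hle, hrk, hwH, hwE, fun x hx hx0 => ?_, fun x hx hxH => ?_⟩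
  · refine (Set.mem_iff_mem_of_ncard_pair_inter_ne_one ?_).symm
    rcases hpair x ⟨hx, hx0⟩ with h | h <;> omega
  · exact Set.mem_or_mem_of_ncard_pair_inter_ne_zero (by simp [hsingle x ⟨hx, hxH⟩])

theorem critNum_le (M : BinMatroid) {W : Submodule (ZMod 2) (Fin M.dim → ZMod 2)}
    (hW : Disjoint ((W : Set (Fin M.dim → ZMod 2)) \ {0}) M.E) :
    M.critNum ≤ M.dim - finrank (ZMod 2) W :=
  Nat.sInf_le ⟨W, by have := (finrank_le W).trans_eq (finrank_fin_fun (ZMod 2)); omega, hW⟩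

theorem exists_finrank_add_critNum_eq (M : BinMatroid) :
    ∃ W : Submodule (ZMod 2) (Fin M.dim → ZMod 2), finrank (ZMod 2) W + M.critNum = M.dim ∧
      Disjoint ((W : Set (Fin M.dim → ZMod 2)) \ {0}) M.E := by
  have hbot : M.critNum ≤ M.dim := by simpa using M.critNum_le (W := ⊥) (by simp)
  obtain ⟨W, hW, hWE⟩ : M.critNum ∈ _ := Nat.sInf_mem ⟨M.dim, ⊥, by simp, by simp⟩
  exact ⟨W, by omega, hWE⟩

theorem critNumRes_le (hWF : W ≤ F) (hW : Disjoint ((W : Set (Fin n → ZMod 2)) \ {0}) E) :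
    critNumRes E F ≤ finrank (ZMod 2) F - finrank (ZMod 2) W :=
  Nat.sInf_le ⟨W, hWF, by have := finrank_mono hWF; omega, hW⟩

theorem exists_finrank_add_critNumRes_eq (E : Set (Fin n → ZMod 2))
    (F : Submodule (ZMod 2) (Fin n → ZMod 2)) :
    ∃ W ≤ F, finrank (ZMod 2) W + critNumRes E F = finrank (ZMod 2) F ∧
      Disjoint ((W : Set (Fin n → ZMod 2)) \ {0}) E := by
  have hbot : critNumRes E F ≤ finrank (ZMod 2) F := by
    simpa using critNumRes_le (E := E) (bot_le : ⊥ ≤ F) (by simp)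
  obtain ⟨W, hWF, hW, hWE⟩ : critNumRes E F ∈ _ :=
    Nat.sInf_mem ⟨finrank (ZMod 2) F, ⊥, bot_le, by simp, by simp⟩
  exact ⟨W, hWF, by omega, hWE⟩

end BinMatroid

/-- If `M = (E, G)`, `G₀` is a hyperplane of `G`, and `M` is the
semidoubling of `M₀ = (E ∩ G₀, G₀)` with respect to a hyperplane `H₀` of `G₀`, then
`χ(M) = χ(M|H₀) + 1`. -/
theorem stmt12 (M : BinMatroid)
    (G₀ H₀ : Submodule (ZMod 2) (Fin M.dim → ZMod 2))
    (hG₀ : Module.finrank (ZMod 2) G₀ + 1 = M.dim)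
    (h : BinMatroid.IsSemidoublingWrt M.E G₀ H₀) :
    M.critNum = BinMatroid.critNumRes M.E H₀ + 1 := by
  obtain ⟨w, hw⟩ := h.exists_isSemidoublingBy
  have hH₀ := hw.finrank_add_one
  apply le_antisymm
  · obtain ⟨W, hWH, hWrk, hWE⟩ := BinMatroid.exists_finrank_add_critNumRes_eq M.E H₀
    have := M.critNum_le (hw.disjoint_sup_span_singleton hWH hWE)
    rw [finrank_sup_span_singleton (hw.notMem_of_le hWH)] at this
    omega
  · obtain ⟨U, hUrk, hUE⟩ := M.exists_finrank_add_critNum_eq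
    obtain ⟨W, hWH, hUW, hWE⟩ := hw.exists_le_disjoint (hG₀.trans (finrank_fin_fun _).symm) hUE
    have := BinMatroid.critNumRes_le hWH hWE
    have := finrank_mono hWH
    omega
end

section
/- Let M = (E, G) and N = (E', G') be matroids in ℰ₃, let H be a hyperplane of G and H' a hyperplane of G'. If χ(M) ≥ dim(N) + min(4, χ(N) + 2), then there is an induced embedding φ of N in M such that φ(G') ∩ H = φ(H'). -/
set_option maxHeartbeats 1000000


section Stmt14Aux

open Module Submodule Set Function

namespace S14

lemma z2 (a : ZMod 2) : a = 0 ∨ a = 1 := by revert a; decide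

lemma z2add (a : ZMod 2) : a + a = 0 := by revert a; decide

lemma z2ne {a b : ZMod 2} (h : a ≠ b) : a = 1 + b := by revert h; revert a b; decide

variable {n : ℕ}

lemma vadd (x : Fin n → ZMod 2) : x + x = 0 := funext fun i => z2add _

lemma veq {x y : Fin n → ZMod 2} (h : x + y = 0) : y = x := by
  have : x + (x + y) = x + 0 := by rw [h]
  rwa [← add_assoc, vadd, zero_add, add_zero] at this

/-- indicator function of the ground set -/
noncomputable def qf (E : Set (Fin n → ZMod 2)) : (Fin n → ZMod 2) → ZMod 2 :=
  fun x => by classical exact if x ∈ E then 1 else 0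

lemma qf_eq_one {E : Set (Fin n → ZMod 2)} {x} : qf E x = 1 ↔ x ∈ E := by
  unfold qf; split <;> simp_all

lemma qf_eq_zero {E : Set (Fin n → ZMod 2)} {x} : qf E x = 0 ↔ x ∉ E := by
  unfold qf; split <;> simp_all

/-- associated bilinear-ish form -/
def Bf (f : (Fin n → ZMod 2) → ZMod 2) (x y : Fin n → ZMod 2) : ZMod 2 :=
  f (x + y) + f x + f y

/-- `IsQuad f` : f vanishes at 0 and Bf is additive in the first argument. -/
structure IsQuad (f : (Fin n → ZMod 2) → ZMod 2) : Prop where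
  zero : f 0 = 0
  addB : ∀ x y z, Bf f (x + y) z = Bf f x z + Bf f y z

namespace IsQuad

variable {f : (Fin n → ZMod 2) → ZMod 2} (hf : IsQuad f)

lemma Bsymm (hf : IsQuad f) (x y : Fin n → ZMod 2) : Bf f x y = Bf f y x := by
  unfold Bf; rw [add_comm x y]; ring

lemma B0 (hf : IsQuad f) (y : Fin n → ZMod 2) : Bf f 0 y = 0 := by
  unfold Bf; rw [zero_add, hf.zero, add_zero, z2add]

lemma By0 (hf : IsQuad f) (x : Fin n → ZMod 2) : Bf f x 0 = 0 := by
  rw [Bsymm hf]; exact hf.B0 x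

lemma Bxx (hf : IsQuad f) (x : Fin n → ZMod 2) : Bf f x x = 0 := by
  unfold Bf; rw [vadd, hf.zero, zero_add, z2add]

lemma addB2 (hf : IsQuad f) (x y z : Fin n → ZMod 2) :
    Bf f x (y + z) = Bf f x y + Bf f x z := by
  rw [Bsymm hf x (y+z), hf.addB, Bsymm hf y x, Bsymm hf z x]

lemma fadd (x y : Fin n → ZMod 2) : f (x + y) = Bf f x y + f x + f y := by
  unfold Bf; generalize f (x+y) = a; generalize f x = b; generalize f y = c
  revert a b c; decide

/-- Bf as a linear map in the first variable, second fixed -/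
noncomputable def lmap (hf : IsQuad f) (y : Fin n → ZMod 2) :
    (Fin n → ZMod 2) →ₗ[ZMod 2] ZMod 2 where
  toFun x := Bf f x y
  map_add' x x' := hf.addB x x' y
  map_smul' a x := by
    rcases z2 a with h | h <;> subst h
    · simp [hf.B0]
    · simp

@[simp] lemma lmap_apply (hf : IsQuad f) (y x : Fin n → ZMod 2) :
    hf.lmap y x = Bf f x y := rfl

end IsQuad

/-- f vanishes identically on a submodule -/
def ZeroOn (f : (Fin n → ZMod 2) → ZMod 2) (W : Submodule (ZMod 2) (Fin n → ZMod 2)) : Prop :=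
  ∀ x ∈ W, f x = 0

end S14

namespace S14

variable {n : ℕ}

abbrev Vn (n : ℕ) := Fin n → ZMod 2

lemma finrank_le_inf_ker (A : Submodule (ZMod 2) (Vn n)) (g : Vn n →ₗ[ZMod 2] ZMod 2) :
    finrank (ZMod 2) A ≤ finrank (ZMod 2) (A ⊓ LinearMap.ker g : Submodule (ZMod 2) (Vn n)) + 1 := by
  by_cases h : A ≤ LinearMap.ker g
  · rw [inf_eq_left.mpr h]; omega
  · obtain ⟨a, haA, hag⟩ := SetLike.not_le_iff_exists.mp h
    have ha1 : g a = 1 := by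
      rcases z2 (g a) with h' | h'
      · exact absurd h' (by simpa [LinearMap.mem_ker] using hag)
      · exact h'
    have ha0 : a ≠ 0 := by rintro rfl; simp at ha1
    have hsup : A ≤ (A ⊓ LinearMap.ker g) ⊔ span (ZMod 2) {a} := by
      intro x hx
      have hx' : x + g x • a ∈ A ⊓ LinearMap.ker g := by
        refine ⟨A.add_mem hx (A.smul_mem _ haA), ?_⟩
        simp [LinearMap.mem_ker, ha1, mul_one, z2add]
      have : x = (x + g x • a) + g x • a := by
        rw [add_assoc, ← smul_add, vadd, smul_zero, add_zero]
      rw [this]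
      exact add_mem (le_sup_left (α := Submodule (ZMod 2) (Vn n)) hx')
        (le_sup_right (α := Submodule (ZMod 2) (Vn n)) (smul_mem _ _ (subset_span rfl)))
    have h1 := Submodule.finrank_mono hsup
    have h2 := Submodule.finrank_sup_add_finrank_inf_eq (A ⊓ LinearMap.ker g) (span (ZMod 2) {a})
    have h3 : finrank (ZMod 2) (span (ZMod 2) {a} : Submodule (ZMod 2) (Vn n)) = 1 :=
      finrank_span_singleton ha0
    omega

variable {f : Vn n → ZMod 2}

/-- If f is constant on a coset t + R, there is a large zero subspace. -/
lemma const_coset (hf : IsQuad f) (R : Submodule (ZMod 2) (Vn n)) (t : Vn n) (c : ZMod 2)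
    (hc : ∀ x ∈ R, f (t + x) = c) :
    ∃ Z : Submodule (ZMod 2) (Vn n), ZeroOn f Z ∧
      finrank (ZMod 2) R ≤ finrank (ZMod 2) Z + 1 := by
  have hft : f t = c := by simpa using hc 0 R.zero_mem
  rcases z2 c with rfl | rfl
  · -- f ≡ 0 on the coset
    by_cases htR : t ∈ R
    · refine ⟨R, fun x hx => ?_, by omega⟩
      have := hc (t + x) (R.add_mem htR hx)
      rwa [← add_assoc, vadd, zero_add] at this
    · refine ⟨(R ⊓ LinearMap.ker (hf.lmap t)) ⊔ span (ZMod 2) {t}, ?_, ?_⟩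
      · intro z hz
        obtain ⟨w, hw, s, hs, rfl⟩ := Submodule.mem_sup.mp hz
        obtain ⟨a, rfl⟩ := Submodule.mem_span_singleton.mp hs
        obtain ⟨hwR, hwk⟩ := hw
        have hBwt : Bf f w t = 0 := by simpa using hwk
        have hfw : f w = 0 := by
          have h1 : f (t + w) = 0 := hc w hwR
          have h2 : f (w + t) = Bf f w t + f w + f t := IsQuad.fadd (f := f) w t
          rw [add_comm w t, h1, hBwt, hft] at h2
          have := h2.symm
          simpa using this
        rcases z2 a with rfl | rfl
        · simpa using hfw
        · rw [one_smul]
          have := hc w hwR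
          rwa [add_comm t w] at this
      · have h1 := finrank_le_inf_ker R (hf.lmap t)
        have h2 : (R ⊓ LinearMap.ker (hf.lmap t)) ≤
            (R ⊓ LinearMap.ker (hf.lmap t)) ⊔ span (ZMod 2) {t} := le_sup_left
        have := Submodule.finrank_mono h2
        omega
  · -- f ≡ 1 on the coset
    refine ⟨R ⊓ LinearMap.ker (hf.lmap t), ?_, finrank_le_inf_ker R (hf.lmap t)⟩
    intro w hw
    obtain ⟨hwR, hwk⟩ := hw
    have hBwt : Bf f w t = 0 := by simpa using hwk
    have h1 : f (t + w) = 1 := hc w hwR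
    have h2 : f (w + t) = Bf f w t + f w + f t := IsQuad.fadd (f := f) w t
    rw [add_comm w t, h1, hBwt, hft] at h2
    have h3 : (1 : ZMod 2) = 0 + f w + 1 := h2
    generalize f w = b at h3 ⊢
    revert h3; revert b; decide

/-- f takes any prescribed value on a coset of a large subspace. -/
lemma coset_value (hf : IsQuad f) (R : Submodule (ZMod 2) (Vn n))
    (hzd : ∀ Z : Submodule (ZMod 2) (Vn n), ZeroOn f Z →
      finrank (ZMod 2) Z + 2 ≤ finrank (ZMod 2) R)
    (t : Vn n) (ε : ZMod 2) : ∃ x ∈ R, f (t + x) = ε := by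
  by_contra h
  push_neg at h
  have hcon : ∀ x ∈ R, f (t + x) = 1 + ε := fun x hx => z2ne (h x hx)
  obtain ⟨Z, hZ, hfr⟩ := const_coset hf R t (1 + ε) hcon
  have := hzd Z hZ
  omega

end S14

namespace S14

variable {n : ℕ} {f : Vn n → ZMod 2}

/-- Inner step: find v in coset t+R with prescribed f-value and B(v,·) nonzero on R. -/
lemma inner_step (hf : IsQuad f) (R : Submodule (ZMod 2) (Vn n))
    (hzd : ∀ Z : Submodule (ZMod 2) (Vn n), ZeroOn f Z →
      finrank (ZMod 2) Z + 4 ≤ finrank (ZMod 2) R)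
    (t : Vn n) (ε : ZMod 2) :
    ∃ x ∈ R, f (t + x) = ε ∧ ∃ u ∈ R, Bf f (t + x) u = 1 := by
  have hzd2 : ∀ Z : Submodule (ZMod 2) (Vn n), ZeroOn f Z →
      finrank (ZMod 2) Z + 2 ≤ finrank (ZMod 2) R := fun Z hZ => by have := hzd Z hZ; omega
  obtain ⟨x₀, hx₀R, hx₀f⟩ := coset_value hf R hzd2 t ε
  by_cases hgood : ∃ u ∈ R, Bf f (t + x₀) u = 1
  · exact ⟨x₀, hx₀R, hx₀f, hgood⟩
  push_neg at hgood
  have hv₀B : ∀ u ∈ R, Bf f (t + x₀) u = 0 := by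
    intro u hu
    rcases z2 (Bf f (t + x₀) u) with h | h
    · exact h
    · exact absurd h (hgood u hu)
  -- find w ∈ R with f w = 0 and B(w, u) = 1 for some u ∈ R
  have hW : ∃ w ∈ R, f w = 0 ∧ ∃ u ∈ R, Bf f w u = 1 := by
    by_contra hw
    push_neg at hw
    have hw' : ∀ w ∈ R, f w = 0 → ∀ u ∈ R, Bf f w u = 0 := by
      intro w hwR hfw u hu
      rcases z2 (Bf f w u) with h | h
      · exact h
      · exact absurd h (hw w hwR hfw u hu)
    -- radical of B on R
    set r : Submodule (ZMod 2) (Vn n) := R ⊓ (⨅ u : R, LinearMap.ker (hf.lmap u.1)) with hr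
    have memr : ∀ w, w ∈ r ↔ (w ∈ R ∧ ∀ u ∈ R, Bf f w u = 0) := by
      intro w
      constructor
      · rintro ⟨h1, h2⟩
        refine ⟨h1, fun u hu => ?_⟩
        have := Submodule.mem_iInf _ |>.mp h2 ⟨u, hu⟩
        simpa using this
      · rintro ⟨h1, h2⟩
        exact ⟨h1, Submodule.mem_iInf _ |>.mpr (fun u => by simpa using h2 u.1 u.2)⟩
    have hrR : r ≤ R := inf_le_left
    have hfr1 : ∀ g ∈ R, g ∉ r → f g = 1 := by
      intro g hgR hgr
      rcases z2 (f g) with h | h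
      · exact absurd ((memr g).mpr ⟨hgR, hw' g hgR h⟩) hgr
      · exact h
    have hrank : finrank (ZMod 2) R ≤ finrank (ZMod 2) r + 2 := by
      by_contra hcon
      push_neg at hcon
      have hne : ¬ (R ≤ r) := by
        intro hle
        have := Submodule.finrank_mono hle
        omega
      obtain ⟨e, heR, her⟩ := SetLike.not_le_iff_exists.mp hne
      have : ∃ u' ∈ R, Bf f e u' ≠ 0 := by
        by_contra hco
        push_neg at hco
        exact her ((memr e).mpr ⟨heR, hco⟩)
      obtain ⟨u', hu'R, hu'⟩ := this
      have hu'1 : Bf f e u' = 1 := by rcases z2 (Bf f e u') with h | h; exact absurd h hu'; exact h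
      have hfrR' : finrank (ZMod 2) R ≤ finrank (ZMod 2)
          ((R ⊓ LinearMap.ker (hf.lmap e)) ⊓ LinearMap.ker (hf.lmap u') : Submodule (ZMod 2) (Vn n)) + 2 := by
        have h1 := finrank_le_inf_ker R (hf.lmap e)
        have h2 := finrank_le_inf_ker (R ⊓ LinearMap.ker (hf.lmap e)) (hf.lmap u')
        omega
      have hrR' : r ≤ (R ⊓ LinearMap.ker (hf.lmap e)) ⊓ LinearMap.ker (hf.lmap u') := by
        intro w hwr
        obtain ⟨hwR, hwall⟩ := (memr w).mp hwr
        exact ⟨⟨hwR, by simpa using hwall e heR⟩, by simpa using hwall u' hu'R⟩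
      have : ¬ ((R ⊓ LinearMap.ker (hf.lmap e)) ⊓ LinearMap.ker (hf.lmap u') ≤ r) := by
        intro hle
        have := Submodule.finrank_mono hle
        omega
      obtain ⟨g, hgR', hgr⟩ := SetLike.not_le_iff_exists.mp this
      have hgR : g ∈ R := hgR'.1.1
      have hge : Bf f g e = 0 := by have := hgR'.1.2; simpa using this
      have hgu' : Bf f g u' = 0 := by have := hgR'.2; simpa using this
      have hfg : f g = 1 := hfr1 g hgR hgr
      have hfe : f e = 1 := hfr1 e heR her
      have hfge : f (g + e) = 0 := by
        rw [IsQuad.fadd (f := f) g e, hge, hfg, hfe]; decide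
      have hmem : g + e ∈ R := R.add_mem hgR heR
      have := hw' (g + e) hmem hfge u' hu'R
      rw [hf.addB g e u', hgu', hu'1] at this
      simp at this
    -- Z₀ = kernel of f on r
    have haddr : ∀ w w' : Vn n, w ∈ r → w' ∈ r → f (w + w') = f w + f w' := by
      intro w w' hw1 hw2
      have hB : Bf f w w' = 0 := ((memr w).mp hw1).2 w' (hrR hw2)
      rw [IsQuad.fadd (f := f) w w', hB, zero_add]
    set g0 : ↥r →ₗ[ZMod 2] ZMod 2 :=
      { toFun := fun w => f w.1
        map_add' := fun w w' => haddr w.1 w'.1 w.2 w'.2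
        map_smul' := fun a w => by
          rcases z2 a with rfl | rfl
          · simpa using hf.zero
          · simp } with hg0
    set Z₀ : Submodule (ZMod 2) (Vn n) := Submodule.map r.subtype (LinearMap.ker g0) with hZ₀
    have hZ₀zero : ZeroOn f Z₀ := by
      rintro x ⟨w, hw, rfl⟩
      simpa [hg0] using hw
    have hfrZ₀ : finrank (ZMod 2) r ≤ finrank (ZMod 2) Z₀ + 1 := by
      have h1 : finrank (ZMod 2) Z₀ = finrank (ZMod 2) (LinearMap.ker g0) :=
        Submodule.finrank_map_subtype_eq r (LinearMap.ker g0)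
      have h2 := LinearMap.finrank_range_add_finrank_ker g0
      have h3 : finrank (ZMod 2) (LinearMap.range g0) ≤ 1 := by
        have := Submodule.finrank_le (LinearMap.range g0)
        simpa using this
      omega
    have := hzd Z₀ hZ₀zero
    omega
  obtain ⟨w, hwR, hfw, u, huR, hBwu⟩ := hW
  have hassoc : t + (x₀ + w) = (t + x₀) + w := by rw [add_assoc]
  refine ⟨x₀ + w, R.add_mem hx₀R hwR, ?_, u, huR, ?_⟩
  · rw [hassoc, IsQuad.fadd (f := f) (t + x₀) w, hv₀B w hwR, hx₀f, hfw, zero_add, add_zero]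
  · rw [hassoc, hf.addB (t + x₀) w u, hv₀B u huR, hBwu, zero_add]

end S14

namespace S14

variable {n : ℕ} {f : Vn n → ZMod 2}

lemma exists_mem_notin (W W' : Submodule (ZMod 2) (Vn n))
    (h : finrank (ZMod 2) W' < finrank (ZMod 2) W) : ∃ x ∈ W, x ∉ W' := by
  by_contra hc
  push_neg at hc
  exact absurd (Submodule.finrank_mono (fun x hx => hc x hx)) (by omega)

lemma exists_zero_vec (hf : IsQuad f) (W : Submodule (ZMod 2) (Vn n))
    (h3 : 3 ≤ finrank (ZMod 2) W) : ∃ v ∈ W, v ≠ 0 ∧ f v = 0 := by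
  by_contra hc
  push_neg at hc
  have hone : ∀ v ∈ W, v ≠ 0 → f v = 1 := by
    intro v hv hv0
    rcases z2 (f v) with h | h
    · exact absurd h (hc v hv hv0)
    · exact h
  obtain ⟨x, hxW, hx0⟩ := exists_mem_notin W ⊥
    (by have hb := finrank_bot (ZMod 2) (Vn n); omega)
  obtain ⟨y, hyW, hy⟩ := exists_mem_notin W (span (ZMod 2) {x})
    (by rw [finrank_span_singleton (by simpa using hx0)]; omega)
  obtain ⟨z, hzW, hz⟩ := exists_mem_notin W (span (ZMod 2) {x} ⊔ span (ZMod 2) {y})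
    (by
      have h1 := Submodule.finrank_sup_add_finrank_inf_eq (span (ZMod 2) {x} : Submodule (ZMod 2) (Vn n)) (span (ZMod 2) {y})
      have h2 : finrank (ZMod 2) (span (ZMod 2) {x} : Submodule (ZMod 2) (Vn n)) = 1 :=
        finrank_span_singleton (by simpa using hx0)
      have h3' : finrank (ZMod 2) (span (ZMod 2) {y} : Submodule (ZMod 2) (Vn n)) ≤ 1 := by
        by_cases hy0 : y = (0 : Vn n)
        · subst hy0
          rw [Submodule.span_zero_singleton, finrank_bot]
          exact Nat.zero_le _
        · rw [finrank_span_singleton hy0]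
      omega)
  have hx0' : x ≠ 0 := by simpa using hx0
  have hy0 : y ≠ 0 := fun h => hy (h ▸ zero_mem _)
  have hz0 : z ≠ 0 := fun h => hz (h ▸ zero_mem _)
  have hxy : x + y ≠ 0 := fun h => hy ((veq h) ▸ subset_span rfl)
  have hxz : x + z ≠ 0 := fun h => hz ((veq h) ▸ le_sup_left (α := Submodule (ZMod 2) (Vn n)) (subset_span rfl))
  have hyz : y + z ≠ 0 := fun h => hz ((veq h) ▸ le_sup_right (α := Submodule (ZMod 2) (Vn n)) (subset_span rfl))
  have hxyz : x + y + z ≠ 0 := fun h => hz ((veq h) ▸ add_mem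
    (le_sup_left (α := Submodule (ZMod 2) (Vn n)) (subset_span rfl))
    (le_sup_right (α := Submodule (ZMod 2) (Vn n)) (subset_span rfl)))
  -- B(x,y) = 1 for any "independent" pair; derive contradiction
  have hBone : ∀ a b : Vn n, a ∈ W → b ∈ W → a ≠ 0 → b ≠ 0 → a + b ≠ 0 → Bf f a b = 1 := by
    intro a b haW hbW ha hb hab
    have h1 : f a = 1 := hone a haW ha
    have h2 : f b = 1 := hone b hbW hb
    have h3 : f (a + b) = 1 := hone (a + b) (add_mem haW hbW) hab
    unfold Bf
    rw [h1, h2, h3]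
    decide
  have h1 : Bf f (x + y) z = 1 := hBone (x + y) z (add_mem hxW hyW) hzW hxy hz0 hxyz
  have h2 : Bf f x z = 1 := hBone x z hxW hzW hx0' hz0 hxz
  have h3 : Bf f y z = 1 := hBone y z hyW hzW hy0 hz0 hyz
  have := hf.addB x y z
  rw [h1, h2, h3] at this
  simp at this

lemma shrink (W : Submodule (ZMod 2) (Vn n)) (k : ℕ) (hk : k ≤ finrank (ZMod 2) W) :
    ∃ W' ≤ W, finrank (ZMod 2) W' = k := by
  induction k with
  | zero => exact ⟨⊥, bot_le, finrank_bot _ _⟩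
  | succ k ih =>
    obtain ⟨W', hle, hfr⟩ := ih (by omega)
    obtain ⟨x, hxW, hxW'⟩ := exists_mem_notin W W' (by omega)
    have hx0 : x ≠ 0 := fun h => hxW' (h ▸ zero_mem _)
    refine ⟨W' ⊔ span (ZMod 2) {x}, sup_le hle (span_le.mpr (by simpa using hxW)), ?_⟩
    have hinf : W' ⊓ span (ZMod 2) {x} = ⊥ := by
      rw [eq_bot_iff]
      rintro v ⟨hv1, hv2⟩
      obtain ⟨a, rfl⟩ := Submodule.mem_span_singleton.mp hv2
      rcases z2 a with rfl | rfl
      · simp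
      · rw [one_smul] at hv1; exact absurd hv1 hxW'
    have := Submodule.finrank_sup_add_finrank_inf_eq W' (span (ZMod 2) {x})
    rw [hinf] at this
    have h0 : finrank (ZMod 2) (⊥ : Submodule (ZMod 2) (Vn n)) = 0 := finrank_bot _ _
    have h1 : finrank (ZMod 2) (span (ZMod 2) {x} : Submodule (ZMod 2) (Vn n)) = 1 :=
      finrank_span_singleton hx0
    omega

/-- Witt-type bound: there is a zero subspace of dimension ≥ ⌈dim W/2⌉ - 1. -/
lemma witt (hf : IsQuad f) (W : Submodule (ZMod 2) (Vn n)) :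
    ∃ Z ≤ W, ZeroOn f Z ∧ finrank (ZMod 2) W ≤ 2 * finrank (ZMod 2) Z + 2 := by
  generalize hd : finrank (ZMod 2) W = d
  induction d using Nat.strong_induction_on generalizing W with
  | _ d ih =>
  by_cases hsmall : finrank (ZMod 2) W ≤ 2
  · exact ⟨⊥, bot_le, fun x hx => by simp at hx; simp [hx, hf.zero], by
      have := finrank_bot (ZMod 2) (Vn n); omega⟩
  · push_neg at hsmall
    obtain ⟨v, hvW, hv0, hfv⟩ := exists_zero_vec hf W (by omega)
    obtain ⟨i, hvi⟩ : ∃ i, v i ≠ 0 := by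
      by_contra hc; push_neg at hc; exact hv0 (funext fun i => hc i)
    have hvi1 : v i = 1 := by rcases z2 (v i) with h | h; exact absurd h hvi; exact h
    set W₀ : Submodule (ZMod 2) (Vn n) := W ⊓ LinearMap.ker (hf.lmap v) with hW₀
    have hvW₀ : v ∈ W₀ := ⟨hvW, by simp [hf.Bxx]⟩
    set C : Submodule (ZMod 2) (Vn n) := W₀ ⊓ LinearMap.ker (LinearMap.proj (R := ZMod 2) (φ := fun _ : Fin n => ZMod 2) i) with hC
    have hvC : v ∉ C := by
      intro hv
      have h2 : (LinearMap.proj (R := ZMod 2) (φ := fun _ : Fin n => ZMod 2) i) v = 0 :=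
        hv.2
      rw [LinearMap.proj_apply, hvi1] at h2
      exact one_ne_zero h2
    have hsupW₀ : W₀ ≤ C ⊔ span (ZMod 2) {v} := by
      intro x hx
      have hxv : x + x i • v ∈ C := by
        refine ⟨W₀.add_mem hx (W₀.smul_mem _ hvW₀), LinearMap.mem_ker.mpr ?_⟩
        rw [LinearMap.proj_apply]
        have h5 : (x + x i • v) i = x i + x i * v i := rfl
        rw [h5, hvi1, mul_one, z2add]
      have hre : x = (x + x i • v) + x i • v := by
        rw [add_assoc, ← two_smul (ZMod 2), show ((2 : ZMod 2)) = 0 by decide, zero_smul, add_zero]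
      rw [hre]
      exact add_mem (le_sup_left (α := Submodule (ZMod 2) (Vn n)) hxv)
        (le_sup_right (α := Submodule (ZMod 2) (Vn n)) (smul_mem _ _ (subset_span rfl)))
    have hCW : C ≤ W := le_trans inf_le_left inf_le_left
    have hCltW : finrank (ZMod 2) C < finrank (ZMod 2) W :=
      finrank_lt_finrank_of_lt (lt_of_le_of_ne hCW (fun h => hvC (h ▸ hvW)))
    obtain ⟨Z', hZ'C, hZ'zero, hZ'fr⟩ := ih (finrank (ZMod 2) C) (by omega) C rfl
    refine ⟨Z' ⊔ span (ZMod 2) {v}, sup_le (le_trans hZ'C hCW) (span_le.mpr (by simpa using hvW)), ?_, ?_⟩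
    · intro zz hzz
      obtain ⟨w, hw, s, hs, rfl⟩ := Submodule.mem_sup.mp hzz
      obtain ⟨a, rfl⟩ := Submodule.mem_span_singleton.mp hs
      have hfw : f w = 0 := hZ'zero w hw
      rcases z2 a with rfl | rfl
      · simpa using hfw
      · rw [one_smul, IsQuad.fadd (f := f) w v, hfw, hfv]
        have hBwv : Bf f w v = 0 := by
          have := (hZ'C hw).1.2
          simpa using this
        rw [hBwv]; decide
    · have hfrW : finrank (ZMod 2) W ≤ finrank (ZMod 2) W₀ + 1 := finrank_le_inf_ker W (hf.lmap v)
      have hsup2 := Submodule.finrank_sup_add_finrank_inf_eq C (span (ZMod 2) {v})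
      have hsp1 : finrank (ZMod 2) (span (ZMod 2) {v} : Submodule (ZMod 2) (Vn n)) = 1 :=
        finrank_span_singleton hv0
      have hfrW₀ : finrank (ZMod 2) W₀ ≤ finrank (ZMod 2) (C ⊔ span (ZMod 2) {v} : Submodule (ZMod 2) (Vn n)) :=
        Submodule.finrank_mono hsupW₀
      have hZfr : finrank (ZMod 2) (Z' ⊔ span (ZMod 2) {v} : Submodule (ZMod 2) (Vn n)) = finrank (ZMod 2) Z' + 1 := by
        have hinf : Z' ⊓ span (ZMod 2) {v} = ⊥ := by
          rw [eq_bot_iff]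
          rintro w ⟨hw1, hw2⟩
          obtain ⟨a, rfl⟩ := Submodule.mem_span_singleton.mp hw2
          rcases z2 a with rfl | rfl
          · simp
          · rw [one_smul] at hw1; exact absurd (hZ'C hw1) hvC
        have := Submodule.finrank_sup_add_finrank_inf_eq Z' (span (ZMod 2) {v})
        rw [hinf] at this
        have h0 : finrank (ZMod 2) (⊥ : Submodule (ZMod 2) (Vn n)) = 0 := finrank_bot _ _
        omega
      omega

end S14

namespace S14

variable {n : ℕ} {f : Vn n → ZMod 2}

lemma iInf_fin_succ {α : Type*} [CompleteLattice α] {i : ℕ} (K : Fin (i+1) → α) :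
    (⨅ j, K j) = K 0 ⊓ ⨅ j : Fin i, K j.succ := by
  apply le_antisymm
  · exact le_inf (iInf_le _ 0) (le_iInf fun j => iInf_le _ _)
  · refine le_iInf fun j => ?_
    induction j using Fin.cases with
    | zero => exact inf_le_left
    | succ j' => exact le_trans inf_le_right (iInf_le _ j')

lemma finrank_inf_iInf_ker (i : ℕ) :
    ∀ (A : Submodule (ZMod 2) (Vn n)) (g : Fin i → (Vn n →ₗ[ZMod 2] ZMod 2)),
    finrank (ZMod 2) A ≤
      finrank (ZMod 2) (A ⊓ ⨅ j, LinearMap.ker (g j) : Submodule (ZMod 2) (Vn n)) + i := by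
  induction i with
  | zero =>
    intro A g
    rw [iInf_of_empty, inf_top_eq]
    omega
  | succ i ih =>
    intro A g
    have hdec : A ⊓ ⨅ j, LinearMap.ker (g j) =
        (A ⊓ LinearMap.ker (g 0)) ⊓ ⨅ j : Fin i, LinearMap.ker (g j.succ) := by
      rw [iInf_fin_succ (fun j => LinearMap.ker (g j)), inf_assoc]
    have h1 := finrank_le_inf_ker A (g 0)
    have h2 := ih (A ⊓ LinearMap.ker (g 0)) (fun j => g j.succ)
    rw [hdec]
    omega

/-- The greedy construction for the main branch. -/
lemma greedy (hf : IsQuad f) (H : Submodule (ZMod 2) (Vn n)) (p : ℕ)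
    (hH : finrank (ZMod 2) H + 1 = n)
    (τ : Fin (p+1) → ZMod 2) (σ : Fin (p+1) → Fin (p+1) → ZMod 2)
    (hσs : ∀ j k, σ j k = σ k j) (hσ0 : ∀ j, σ j j = 0)
    (hzd : ∀ Z : Submodule (ZMod 2) (Vn n), ZeroOn f Z →
      finrank (ZMod 2) Z + p + 4 ≤ n) :
    ∃ vv : Fin (p+1) → Vn n,
      (∀ j : Fin p, vv j.castSucc ∈ H) ∧ vv (Fin.last p) ∉ H ∧
      (∀ j, f (vv j) = τ j) ∧
      (∀ j k, Bf f (vv j) (vv k) = σ j k) ∧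
      LinearIndependent (ZMod 2) vv := by
  -- the inductive construction of the first p vectors together with dual vectors
  have aux : ∀ i : ℕ, (hi : i ≤ p) → ∃ v w : Fin i → Vn n,
      (∀ j, v j ∈ H) ∧ (∀ j, w j ∈ H) ∧
      (∀ j, f (v j) = τ (Fin.castLE (by omega) j)) ∧
      (∀ j k, Bf f (v j) (v k) = σ (Fin.castLE (by omega) j) (Fin.castLE (by omega) k)) ∧
      (∀ j k, Bf f (w j) (v k) = if j = k then 1 else 0) := by
    intro i hi
    induction i with
    | zero => exact ⟨Fin.elim0, Fin.elim0, fun j => j.elim0, fun j => j.elim0,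
        fun j => j.elim0, fun j => j.elim0, fun j => j.elim0⟩
    | succ i ihh =>
      obtain ⟨v, w, hvH, hwH, hvf, hvB, hwB⟩ := ihh (by omega)
      set R : Submodule (ZMod 2) (Vn n) := H ⊓ ⨅ j, LinearMap.ker (hf.lmap (v j)) with hR
      have hmemR : ∀ x, x ∈ R → (x ∈ H ∧ ∀ j, Bf f x (v j) = 0) := by
        rintro x ⟨h1, h2⟩
        exact ⟨h1, fun j => by simpa using (Submodule.mem_iInf _).mp h2 j⟩
      have hfrR : n ≤ finrank (ZMod 2) R + i + 1 := by
        have h9 := finrank_inf_iInf_ker i H (fun j => hf.lmap (v j))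
        rw [← hR] at h9
        omega
      have hzd4 : ∀ Z : Submodule (ZMod 2) (Vn n), ZeroOn f Z →
          finrank (ZMod 2) Z + 4 ≤ finrank (ZMod 2) R := by
        intro Z hZ
        have := hzd Z hZ
        omega
      set cn : Fin (p+1) := Fin.castLE (by omega) (Fin.last i) with hcn
      set cs : Fin i → Fin (p+1) := fun j => Fin.castLE (by omega : i ≤ p + 1) j with hcs
      set t : Vn n := ∑ j : Fin i, σ cn (cs j) • w j with ht
      have htH : t ∈ H := sum_mem (fun j _ => H.smul_mem _ (hwH j))
      have htB : ∀ k, Bf f t (v k) = σ cn (cs k) := by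
        intro k
        have h1 : Bf f t (v k) = hf.lmap (v k) t := rfl
        rw [h1, ht, map_sum]
        have h2 : ∀ j, hf.lmap (v k) (σ cn (cs j) • w j)
            = if j = k then σ cn (cs j) else 0 := by
          intro j
          rw [map_smul]
          simp only [smul_eq_mul, IsQuad.lmap_apply, hwB j k]
          split <;> simp
        rw [Finset.sum_congr rfl (fun j _ => h2 j)]
        simp
      obtain ⟨x, hxR, hxf, u, huR, hxu⟩ := inner_step hf R hzd4 t (τ cn)
      obtain ⟨hxH, hxB⟩ := hmemR x hxR
      obtain ⟨huH, huB⟩ := hmemR u huR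
      set vnew : Vn n := t + x with hvnew
      have hvnewH : vnew ∈ H := H.add_mem htH hxH
      have hvnewB : ∀ k, Bf f vnew (v k) = σ cn (cs k) := by
        intro k
        rw [hvnew, hf.addB, htB, hxB, add_zero]
      have hBwnew : ∀ (y : Vn n) (β : ZMod 2) (z : Vn n), Bf f (y + β • u) z
          = Bf f y z + β * Bf f u z := by
        intro y β z
        have : Bf f (y + β • u) z = hf.lmap z (y + β • u) := rfl
        rw [this, map_add, map_smul]
        simp
      refine ⟨Fin.snoc v vnew, Fin.snoc (fun j => w j + (Bf f (w j) vnew) • u) u,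
        ?_, ?_, ?_, ?_, ?_⟩
      · intro j
        induction j using Fin.lastCases with
        | last => simpa using hvnewH
        | cast j => simpa using hvH j
      · intro j
        induction j using Fin.lastCases with
        | last => simpa using huH
        | cast j => simpa using H.add_mem (hwH j) (H.smul_mem _ huH)
      · intro j
        induction j using Fin.lastCases with
        | last =>
          simp only [Fin.snoc_last]
          exact hxf
        | cast j =>
          simp only [Fin.snoc_castSucc]
          exact hvf j
      · intro j k
        induction j using Fin.lastCases with
        | last =>
          induction k using Fin.lastCases with
          | last =>
            simp only [Fin.snoc_last]
            rw [hf.Bxx]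
            exact (hσ0 _).symm
          | cast k =>
            simp only [Fin.snoc_last, Fin.snoc_castSucc]
            exact hvnewB k
        | cast j =>
          induction k using Fin.lastCases with
          | last =>
            simp only [Fin.snoc_last, Fin.snoc_castSucc]
            rw [IsQuad.Bsymm hf, hvnewB j, hσs]
            rfl
          | cast k =>
            simp only [Fin.snoc_castSucc]
            exact hvB j k
      · intro j k
        induction j using Fin.lastCases with
        | last =>
          induction k using Fin.lastCases with
          | last =>
            simp only [Fin.snoc_last, if_pos rfl]
            rw [IsQuad.Bsymm hf]
            exact hxu
          | cast k =>
            simp only [Fin.snoc_last, Fin.snoc_castSucc]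
            rw [if_neg (Fin.castSucc_lt_last k).ne']
            exact huB k
        | cast j =>
          induction k using Fin.lastCases with
          | last =>
            simp only [Fin.snoc_last, Fin.snoc_castSucc]
            rw [hBwnew (w j) (Bf f (w j) vnew) vnew, IsQuad.Bsymm hf u vnew, hxu, mul_one, z2add,
              if_neg (Fin.castSucc_lt_last j).ne]
          | cast k =>
            simp only [Fin.snoc_castSucc]
            rw [hBwnew (w j) (Bf f (w j) vnew) (v k), hwB j k, huB k, mul_zero, add_zero]
            by_cases h : j = k
            · subst h; simp
            · rw [if_neg h, if_neg (fun hc => h (Fin.castSucc_injective _ hc))]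
  -- main part: use aux at i = p, then add the last vector outside H
  obtain ⟨v, w, hvH, hwH, hvf, hvB, hwB⟩ := aux p le_rfl
  have haac : ∀ a c : ZMod 2, a + (a + c) = c := by decide
  have hHne : ∃ x₀ : Vn n, x₀ ∉ H := by
    by_contra hc
    push_neg at hc
    have : H = ⊤ := Submodule.eq_top_iff'.mpr hc
    rw [this] at hH
    have h8 := finrank_top (ZMod 2) (Vn n)
    have h9 : finrank (ZMod 2) (Vn n) = n := Module.finrank_fin_fun (ZMod 2)
    omega
  obtain ⟨x₀, hx₀H⟩ := hHne
  set t' : Vn n := x₀ + ∑ j : Fin p,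
      (Bf f x₀ (v j) + σ (Fin.last p) (Fin.castLE (by omega) j)) • w j with ht'
  have ht'B : ∀ k, Bf f t' (v k) = σ (Fin.last p) (Fin.castLE (by omega) k) := by
    intro k
    have h1 : Bf f t' (v k) = hf.lmap (v k) t' := rfl
    rw [h1, ht', map_add, map_sum]
    have h2 : ∀ j, hf.lmap (v k) ((Bf f x₀ (v j) + σ (Fin.last p) (Fin.castLE (by omega) j)) • w j)
        = if j = k then Bf f x₀ (v j) + σ (Fin.last p) (Fin.castLE (by omega) j) else 0 := by
      intro j
      rw [map_smul]
      simp only [smul_eq_mul, IsQuad.lmap_apply, hwB j k]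
      split <;> simp
    rw [Finset.sum_congr rfl (fun j _ => h2 j)]
    simp only [Finset.sum_ite_eq', Finset.mem_univ, if_pos]
    exact haac _ _
  have ht'H : t' ∉ H := by
    intro hc
    apply hx₀H
    have hsum : (∑ j : Fin p,
        (Bf f x₀ (v j) + σ (Fin.last p) (Fin.castLE (by omega) j)) • w j) ∈ H :=
      sum_mem (fun j _ => H.smul_mem _ (hwH j))
    have : x₀ = t' + ∑ j : Fin p,
        (Bf f x₀ (v j) + σ (Fin.last p) (Fin.castLE (by omega) j)) • w j := by
      rw [ht', add_assoc, vadd, add_zero]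
    rw [this]
    exact H.add_mem hc hsum
  set R : Submodule (ZMod 2) (Vn n) := H ⊓ ⨅ j, LinearMap.ker (hf.lmap (v j)) with hR
  have hmemR : ∀ x, x ∈ R → (x ∈ H ∧ ∀ j, Bf f x (v j) = 0) := by
    rintro x ⟨h1, h2⟩
    exact ⟨h1, fun j => by simpa using (Submodule.mem_iInf _).mp h2 j⟩
  have hfrR : n ≤ finrank (ZMod 2) R + p + 1 := by
    have h9 := finrank_inf_iInf_ker p H (fun j => hf.lmap (v j))
    rw [← hR] at h9
    omega
  have hzd2 : ∀ Z : Submodule (ZMod 2) (Vn n), ZeroOn f Z →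
      finrank (ZMod 2) Z + 2 ≤ finrank (ZMod 2) R := by
    intro Z hZ
    have := hzd Z hZ
    omega
  obtain ⟨x, hxR, hxf⟩ := coset_value hf R hzd2 t' (τ (Fin.last p))
  obtain ⟨hxH, hxB⟩ := hmemR x hxR
  set vlast : Vn n := t' + x with hvlast
  have hvlastH : vlast ∉ H := by
    intro hc
    apply ht'H
    have : t' = vlast + x := by rw [hvlast, add_assoc, vadd, add_zero]
    rw [this]
    exact H.add_mem hc hxH
  have hvlastB : ∀ k, Bf f vlast (v k) = σ (Fin.last p) (Fin.castLE (by omega) k) := by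
    intro k
    rw [hvlast, hf.addB, ht'B, hxB, add_zero]
  refine ⟨Fin.snoc v vlast, ?_, ?_, ?_, ?_, ?_⟩
  · intro j
    simpa using hvH j
  · simpa using hvlastH
  · intro j
    induction j using Fin.lastCases with
    | last => simpa using hxf
    | cast j =>
      simp only [Fin.snoc_castSucc]
      exact hvf j
  · intro j k
    induction j using Fin.lastCases with
    | last =>
      induction k using Fin.lastCases with
      | last =>
        simp only [Fin.snoc_last]
        rw [hf.Bxx]
        exact (hσ0 _).symm
      | cast k =>
        simp only [Fin.snoc_last, Fin.snoc_castSucc]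
        exact hvlastB k
    | cast j =>
      induction k using Fin.lastCases with
      | last =>
        simp only [Fin.snoc_last, Fin.snoc_castSucc]
        rw [IsQuad.Bsymm hf, hvlastB j, hσs]
        rfl
      | cast k =>
        simp only [Fin.snoc_castSucc]
        exact hvB j k
  · rw [Fintype.linearIndependent_iff]
    intro g hg
    rw [Fin.sum_univ_castSucc] at hg
    simp only [Fin.snoc_castSucc, Fin.snoc_last] at hg
    have hglast : g (Fin.last p) = 0 := by
      rcases z2 (g (Fin.last p)) with h | h
      · exact h
      · exfalso
        rw [h, one_smul] at hg
        have : vlast = ∑ j : Fin p, g j.castSucc • v j := veq hg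
        apply hvlastH
        rw [this]
        exact sum_mem (fun j _ => H.smul_mem _ (hvH j))
    rw [hglast, zero_smul, add_zero] at hg
    have hgz : ∀ k : Fin p, g k.castSucc = 0 := by
      intro k
      have h1 : hf.lmap (w k) (∑ j : Fin p, g j.castSucc • v j) = 0 := by
        rw [hg, map_zero]
      rw [map_sum] at h1
      have h2 : ∀ j, hf.lmap (w k) (g j.castSucc • v j)
          = if j = k then g j.castSucc else 0 := by
        intro j
        rw [map_smul]
        simp only [smul_eq_mul, IsQuad.lmap_apply]
        rw [IsQuad.Bsymm hf, hwB k j]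
        by_cases h : j = k
        · subst h; simp
        · rw [if_neg (fun hc => h hc.symm), if_neg h, mul_zero]
      rw [Finset.sum_congr rfl (fun j _ => h2 j)] at h1
      simpa using h1
    intro j
    induction j using Fin.lastCases with
    | last => exact hglast
    | cast j => exact hgz j

end S14

namespace S14

variable {n : ℕ}

lemma quad_of_even (E : Set (Vn n)) (h0 : (0 : Vn n) ∉ E)
    (hE : ∀ W : Submodule (ZMod 2) (Vn n), 3 ≤ finrank (ZMod 2) W →
      Even ((E ∩ ((W : Set (Vn n)) \ {0})).ncard)) : IsQuad (qf E) := by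
  classical
  constructor
  · exact qf_eq_zero.mpr h0
  · intro x y z
    have hq0 : qf E 0 = 0 := qf_eq_zero.mpr h0
    suffices h : qf E (x+y+z) + qf E (x+y) + qf E (x+z) + qf E (y+z)
        + qf E x + qf E y + qf E z = 0 by
      unfold Bf
      revert h
      generalize qf E (x+y+z) = a1
      generalize qf E (x+y) = a2
      generalize qf E (x+z) = a3
      generalize qf E (y+z) = a4
      generalize qf E x = a5
      generalize qf E y = a6
      generalize qf E z = a7
      revert a1 a2 a3 a4 a5 a6 a7
      decide
    by_cases h1 : x = 0
    · subst h1
      simp only [zero_add]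
      rw [hq0]
      generalize qf E (y+z) = a; generalize qf E y = b; generalize qf E z = c
      revert a b c; decide
    by_cases h2 : y = 0
    · subst h2
      simp only [zero_add, add_zero]
      rw [hq0]
      generalize qf E (x+z) = a; generalize qf E x = b; generalize qf E z = c
      revert a b c; decide
    by_cases h3 : z = 0
    · subst h3
      simp only [add_zero]
      rw [hq0]
      generalize qf E (x+y) = a; generalize qf E x = b; generalize qf E y = c
      revert a b c; decide
    by_cases h4 : x + y = 0
    · rw [veq h4, vadd x]
      simp only [zero_add]
      rw [hq0]
      generalize qf E (x+z) = a; generalize qf E x = b; generalize qf E z = c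
      revert a b c; decide
    by_cases h5 : x + z = 0
    · rw [veq h5]
      have e1 : x + y + x = y := by
        rw [add_comm x y, add_assoc, vadd, add_zero]
      have e2 : y + x = x + y := add_comm y x
      rw [e1, vadd x, e2, hq0]
      generalize qf E (x+y) = a; generalize qf E x = b; generalize qf E y = c
      revert a b c; decide
    by_cases h6 : y + z = 0
    · rw [veq h6]
      have e1 : x + y + y = x := by rw [add_assoc, vadd, add_zero]
      rw [e1, vadd y, hq0]
      generalize qf E (x+y) = a; generalize qf E x = b; generalize qf E y = c
      revert a b c; decide
    by_cases h7 : x + y + z = 0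
    · rw [veq h7]
      have e1 : x + (x + y) = y := by rw [← add_assoc, vadd, zero_add]
      have e2 : y + (x + y) = x := by
        rw [add_comm x y, ← add_assoc, vadd, zero_add]
      rw [vadd (x+y), e1, e2, hq0]
      generalize qf E (x+y) = a; generalize qf E x = b; generalize qf E y = c
      revert a b c; decide
    -- main case : x, y, z linearly independent
    have hli : LinearIndependent (ZMod 2) ![x, y, z] := by
      rw [Fintype.linearIndependent_iff]
      intro g hg
      rw [Fin.sum_univ_three] at hg
      simp only [Matrix.cons_val_zero, Matrix.cons_val_one, Matrix.head_cons,
        Matrix.cons_val_two, Matrix.tail_cons] at hg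
      rcases z2 (g 0) with hg0 | hg0 <;> rcases z2 (g 1) with hg1 | hg1 <;>
        rcases z2 (g 2) with hg2 | hg2 <;>
        rw [hg0, hg1, hg2] at hg <;>
        simp only [one_smul, zero_smul, zero_add, add_zero] at hg
      · intro i
        fin_cases i <;> assumption
      · exact absurd hg h3
      · exact absurd hg h2
      · exact absurd hg h6
      · exact absurd hg h1
      · exact absurd hg h5
      · exact absurd hg h4
      · exact absurd hg h7
    have hco : ∀ g g' : Fin 3 → ZMod 2,
        (∑ i, g i • (![x,y,z]) i) = (∑ i, g' i • (![x,y,z]) i) → g = g' := by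
      intro g g' h
      have hz : ∑ i, (g - g') i • (![x,y,z]) i = 0 := by
        simp only [Pi.sub_apply, sub_smul, Finset.sum_sub_distrib, h, sub_self]
      have := Fintype.linearIndependent_iff.mp hli (g - g') hz
      funext i
      have hi := this i
      simp only [Pi.sub_apply] at hi
      exact sub_eq_zero.mp hi
    have hrep : ∀ a b c : ZMod 2, (∑ i, (![a,b,c]) i • (![x,y,z]) i) = a•x+b•y+c•z := by
      intro a b c
      rw [Fin.sum_univ_three]
      simp
    have hNE : ∀ (a b c a' b' c' : ZMod 2), ¬(a = a' ∧ b = b' ∧ c = c') →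
        a•x+b•y+c•z ≠ a'•x+b'•y+c'•z := by
      intro a b c a' b' c' hne heq
      apply hne
      have h := hco ![a,b,c] ![a',b',c'] (by rw [hrep, hrep, heq])
      refine ⟨congrFun h 0, congrFun h 1, congrFun h 2⟩
    have sm : ∀ v : Vn n, (1:ZMod 2)•v = v := one_smul _
    have sz : ∀ v : Vn n, (0:ZMod 2)•v = 0 := zero_smul _
    have d12 : x ≠ y := by
      have := hNE 1 0 0 0 1 0 (by decide); simpa [sm, sz] using this
    have d13 : x ≠ z := by
      have := hNE 1 0 0 0 0 1 (by decide); simpa [sm, sz] using this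
    have d14 : x ≠ x+y := by
      have := hNE 1 0 0 1 1 0 (by decide); simpa [sm, sz] using this
    have d15 : x ≠ x+z := by
      have := hNE 1 0 0 1 0 1 (by decide); simpa [sm, sz] using this
    have d16 : x ≠ y+z := by
      have := hNE 1 0 0 0 1 1 (by decide); simpa [sm, sz] using this
    have d17 : x ≠ x+y+z := by
      have := hNE 1 0 0 1 1 1 (by decide); simpa [sm, sz] using this
    have d23 : y ≠ z := by
      have := hNE 0 1 0 0 0 1 (by decide); simpa [sm, sz] using this
    have d24 : y ≠ x+y := by
      have := hNE 0 1 0 1 1 0 (by decide); simpa [sm, sz] using this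
    have d25 : y ≠ x+z := by
      have := hNE 0 1 0 1 0 1 (by decide); simpa [sm, sz] using this
    have d26 : y ≠ y+z := by
      have := hNE 0 1 0 0 1 1 (by decide); simpa [sm, sz] using this
    have d27 : y ≠ x+y+z := by
      have := hNE 0 1 0 1 1 1 (by decide); simpa [sm, sz] using this
    have d34 : z ≠ x+y := by
      have := hNE 0 0 1 1 1 0 (by decide); simpa [sm, sz] using this
    have d35 : z ≠ x+z := by
      have := hNE 0 0 1 1 0 1 (by decide); simpa [sm, sz] using this
    have d36 : z ≠ y+z := by
      have := hNE 0 0 1 0 1 1 (by decide); simpa [sm, sz] using this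
    have d37 : z ≠ x+y+z := by
      have := hNE 0 0 1 1 1 1 (by decide); simpa [sm, sz] using this
    have d45 : x+y ≠ x+z := by
      have := hNE 1 1 0 1 0 1 (by decide); simpa [sm, sz] using this
    have d46 : x+y ≠ y+z := by
      have := hNE 1 1 0 0 1 1 (by decide); simpa [sm, sz] using this
    have d47 : x+y ≠ x+y+z := by
      have := hNE 1 1 0 1 1 1 (by decide); simpa [sm, sz] using this
    have d56 : x+z ≠ y+z := by
      have := hNE 1 0 1 0 1 1 (by decide); simpa [sm, sz] using this
    have d57 : x+z ≠ x+y+z := by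
      have := hNE 1 0 1 1 1 1 (by decide); simpa [sm, sz] using this
    have d67 : y+z ≠ x+y+z := by
      have := hNE 0 1 1 1 1 1 (by decide); simpa [sm, sz] using this
    set W : Submodule (ZMod 2) (Vn n) := span (ZMod 2) ({x, y, z} : Set (Vn n)) with hW
    have hfrW : finrank (ZMod 2) W = 3 := by
      have hr : Set.range (![x,y,z]) = ({x, y, z} : Set (Vn n)) := by
        ext w
        constructor
        · rintro ⟨i, rfl⟩
          fin_cases i <;> simp
        · intro hw
          rcases hw with h | h | h
          · exact ⟨0, h.symm⟩
          · exact ⟨1, h.symm⟩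
          · exact ⟨2, h.symm⟩
      have := finrank_span_eq_card hli
      rw [hr] at this
      rw [hW, this]
      simp
    have heven := hE W (by omega)
    set P : Finset (Vn n) := {x, y, z, x+y, x+z, y+z, x+y+z} with hP
    have hset : ((W : Set (Vn n)) \ {0}) = ↑P := by
      ext w
      constructor
      · rintro ⟨hwW, hw0⟩
        simp only [Set.mem_singleton_iff] at hw0
        rw [hW, SetLike.mem_coe] at hwW
        rw [show ({x, y, z} : Set (Vn n)) = insert x (insert y {z}) from rfl] at hwW
        obtain ⟨a, w1, hw1, rfl⟩ := Submodule.mem_span_insert.mp hwW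
        obtain ⟨b, w2, hw2, rfl⟩ := Submodule.mem_span_insert.mp hw1
        obtain ⟨c, rfl⟩ := Submodule.mem_span_singleton.mp hw2
        simp only [hP, Finset.coe_insert, Set.mem_insert_iff, Finset.coe_singleton,
          Set.mem_singleton_iff]
        rcases z2 a with rfl | rfl <;> rcases z2 b with rfl | rfl <;>
          rcases z2 c with rfl | rfl <;>
          simp only [sm, sz, zero_add, add_zero] at hw0 ⊢
        · simp at hw0
        · tauto
        · tauto
        · tauto
        · tauto
        · tauto
        · tauto
        · rw [← add_assoc]; tauto
      · intro hw
        have hxW : x ∈ W := subset_span (by simp)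
        have hyW : y ∈ W := subset_span (by simp)
        have hzW : z ∈ W := subset_span (by simp)
        simp only [hP, Finset.coe_insert, Set.mem_insert_iff, Finset.coe_singleton,
          Set.mem_singleton_iff] at hw
        rcases hw with rfl | rfl | rfl | rfl | rfl | rfl | rfl
        · exact ⟨hxW, h1⟩
        · exact ⟨hyW, h2⟩
        · exact ⟨hzW, h3⟩
        · exact ⟨add_mem hxW hyW, h4⟩
        · exact ⟨add_mem hxW hzW, h5⟩
        · exact ⟨add_mem hyW hzW, h6⟩
        · exact ⟨add_mem (add_mem hxW hyW) hzW, h7⟩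
    rw [hset] at heven
    have hEP : E ∩ ↑P = ↑(P.filter (· ∈ E)) := by
      ext w
      simp [and_comm]
    rw [hEP, Set.ncard_coe_finset] at heven
    have hsum : (∑ q ∈ P, qf E q) = (((P.filter (· ∈ E)).card : ℕ) : ZMod 2) := by
      rw [← Finset.sum_boole]
      apply Finset.sum_congr rfl
      intro q _
      unfold qf
      simp
    have hcard0 : (((P.filter (· ∈ E)).card : ℕ) : ZMod 2) = 0 := by
      obtain ⟨k, hk⟩ := heven
      rw [hk]
      push_cast
      exact z2add _
    have hm1 : x ∉ ({y, z, x+y, x+z, y+z, x+y+z} : Finset (Vn n)) := by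
      simp [d12, d13, d14, d15, d16, d17]
    have hm2 : y ∉ ({z, x+y, x+z, y+z, x+y+z} : Finset (Vn n)) := by
      simp [d23, d24, d25, d26, d27]
    have hm3 : z ∉ ({x+y, x+z, y+z, x+y+z} : Finset (Vn n)) := by
      simp [d34, d35, d36, d37]
    have hm4 : x+y ∉ ({x+z, y+z, x+y+z} : Finset (Vn n)) := by
      simp [d45, d46, d47]
    have hm5 : x+z ∉ ({y+z, x+y+z} : Finset (Vn n)) := by
      simp [d56, d57]
    have hm6 : y+z ∉ ({x+y+z} : Finset (Vn n)) := by
      simp [d67]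
    have hexp : (∑ q ∈ P, qf E q) = qf E x + (qf E y + (qf E z + (qf E (x+y)
        + (qf E (x+z) + (qf E (y+z) + qf E (x+y+z)))))) := by
      rw [hP]
      rw [Finset.sum_insert hm1, Finset.sum_insert hm2, Finset.sum_insert hm3,
        Finset.sum_insert hm4, Finset.sum_insert hm5, Finset.sum_insert hm6,
        Finset.sum_singleton]
    have hfinal : qf E x + (qf E y + (qf E z + (qf E (x+y)
        + (qf E (x+z) + (qf E (y+z) + qf E (x+y+z)))))) = 0 := by
      rw [← hexp, hsum, hcard0]
    revert hfinal
    generalize qf E (x+y+z) = a1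
    generalize qf E (x+y) = a2
    generalize qf E (x+z) = a3
    generalize qf E (y+z) = a4
    generalize qf E x = a5
    generalize qf E y = a6
    generalize qf E z = a7
    revert a1 a2 a3 a4 a5 a6 a7
    decide


end S14

namespace S14

variable {n : ℕ} {f : Vn n → ZMod 2}

/-- Branch 2: when all the target values are zero, χ ≥ p+3 suffices. -/
lemma zero_branch (hf : IsQuad f) (H : Submodule (ZMod 2) (Vn n)) (p : ℕ)
    (hH : finrank (ZMod 2) H + 1 = n)
    (hzd : ∀ Z : Submodule (ZMod 2) (Vn n), ZeroOn f Z →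
      finrank (ZMod 2) Z + (p + 3) ≤ n) :
    ∃ vv : Fin (p+1) → Vn n,
      (∀ j : Fin p, vv j.castSucc ∈ H) ∧ vv (Fin.last p) ∉ H ∧
      (∀ j, f (vv j) = 0) ∧
      (∀ j k, Bf f (vv j) (vv k) = 0) ∧
      LinearIndependent (ZMod 2) vv := by
  classical
  have hnV : finrank (ZMod 2) (Vn n) = n := Module.finrank_fin_fun (ZMod 2)
  obtain ⟨Z₁, -, hZ₁zero, hZ₁fr⟩ := witt hf (⊤ : Submodule (ZMod 2) (Vn n))
  rw [finrank_top, hnV] at hZ₁fr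
  have hZ₁big : p + 1 ≤ finrank (ZMod 2) Z₁ := by
    have := hzd Z₁ hZ₁zero
    omega
  -- find W ≤ H of dimension p and v₀ ∉ H with everything zero
  have key : ∃ (W : Submodule (ZMod 2) (Vn n)) (v₀ : Vn n),
      W ≤ H ∧ finrank (ZMod 2) W = p ∧ v₀ ∉ H ∧ f v₀ = 0 ∧
      (∀ w ∈ W, f w = 0 ∧ Bf f w v₀ = 0) := by
    by_cases hcase : Z₁ ≤ H
    · -- find v₀ ∉ H with f v₀ = 0 via coset argument
      have hHne : ∃ x₁ : Vn n, x₁ ∉ H := by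
        by_contra hc
        push_neg at hc
        have h8 : H = ⊤ := Submodule.eq_top_iff'.mpr hc
        rw [h8, finrank_top, hnV] at hH
        omega
      obtain ⟨x₁, hx₁⟩ := hHne
      have hzd2 : ∀ Z : Submodule (ZMod 2) (Vn n), ZeroOn f Z →
          finrank (ZMod 2) Z + 2 ≤ finrank (ZMod 2) H := by
        intro Z hZ
        have := hzd Z hZ
        omega
      obtain ⟨xh, hxhH, hxhf⟩ := coset_value hf H hzd2 x₁ 0
      set v₀ : Vn n := x₁ + xh with hv₀
      have hv₀H : v₀ ∉ H := by
        intro hc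
        apply hx₁
        have : x₁ = v₀ + xh := by rw [hv₀, add_assoc, vadd, add_zero]
        rw [this]
        exact H.add_mem hc hxhH
      have hWfr : p ≤ finrank (ZMod 2) (Z₁ ⊓ LinearMap.ker (hf.lmap v₀) : Submodule (ZMod 2) (Vn n)) := by
        have := finrank_le_inf_ker Z₁ (hf.lmap v₀)
        omega
      obtain ⟨W, hWle, hWfr'⟩ := shrink _ p hWfr
      refine ⟨W, v₀, ?_, hWfr', hv₀H, hxhf, ?_⟩
      · exact fun w hw => hcase ((hWle hw).1)
      · intro w hw
        obtain ⟨hw1, hw2⟩ := hWle hw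
        exact ⟨hZ₁zero w hw1, by simpa using hw2⟩
    · obtain ⟨v₀, hv₀Z, hv₀H⟩ := SetLike.not_le_iff_exists.mp hcase
      have hWfr : p ≤ finrank (ZMod 2) (Z₁ ⊓ H : Submodule (ZMod 2) (Vn n)) := by
        have h1 := Submodule.finrank_sup_add_finrank_inf_eq Z₁ H
        have h2 : finrank (ZMod 2) (Z₁ ⊔ H : Submodule (ZMod 2) (Vn n)) ≤ n := by
          have := Submodule.finrank_le (Z₁ ⊔ H : Submodule (ZMod 2) (Vn n))
          omega
        omega
      obtain ⟨W, hWle, hWfr'⟩ := shrink _ p hWfr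
      refine ⟨W, v₀, fun w hw => (hWle hw).2, hWfr', hv₀H, hZ₁zero v₀ hv₀Z, ?_⟩
      intro w hw
      have hwZ : w ∈ Z₁ := (hWle hw).1
      refine ⟨hZ₁zero w hwZ, ?_⟩
      unfold Bf
      rw [hZ₁zero _ (add_mem hwZ hv₀Z), hZ₁zero w hwZ, hZ₁zero v₀ hv₀Z]
      decide
  obtain ⟨W, v₀, hWH, hWfr, hv₀H, hv₀f, hWall⟩ := key
  -- basis of W
  have hWbasis := Module.finBasis (ZMod 2) ↥W
  set bW := (Module.finBasis (ZMod 2) ↥W).reindex (finCongr hWfr) with hbW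
  set vfam : Fin p → Vn n := fun j => ((bW j : ↥W) : Vn n) with hvfam
  have hvfamW : ∀ j, vfam j ∈ W := fun j => (bW j).2
  have hvfamli : LinearIndependent (ZMod 2) vfam :=
    bW.linearIndependent.map' W.subtype (Submodule.ker_subtype W)
  have hvfamsp : span (ZMod 2) (range vfam) = W := by
    have h1 : range vfam = W.subtype '' (range bW) := by
      rw [hvfam]
      ext w
      simp [Set.range_comp]
    rw [h1, ← Submodule.map_span, Basis.span_eq, Submodule.map_subtype_top]
  refine ⟨Fin.snoc vfam v₀, ?_, ?_, ?_, ?_, ?_⟩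
  · intro j
    simpa using hWH (hvfamW j)
  · simpa using hv₀H
  · intro j
    induction j using Fin.lastCases with
    | last => simpa using hv₀f
    | cast j =>
      simp only [Fin.snoc_castSucc]
      exact (hWall _ (hvfamW j)).1
  · intro j k
    induction j using Fin.lastCases with
    | last =>
      induction k using Fin.lastCases with
      | last => simp only [Fin.snoc_last]; exact hf.Bxx v₀
      | cast k =>
        simp only [Fin.snoc_last, Fin.snoc_castSucc]
        rw [IsQuad.Bsymm hf]
        exact (hWall _ (hvfamW k)).2
    | cast j =>
      induction k using Fin.lastCases with
      | last =>
        simp only [Fin.snoc_last, Fin.snoc_castSucc]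
        exact (hWall _ (hvfamW j)).2
      | cast k =>
        simp only [Fin.snoc_castSucc]
        unfold Bf
        rw [(hWall _ (W.add_mem (hvfamW j) (hvfamW k))).1,
          (hWall _ (hvfamW j)).1, (hWall _ (hvfamW k)).1]
        decide
  · rw [linearIndependent_fin_snoc]
    refine ⟨hvfamli, ?_⟩
    rw [hvfamsp]
    exact fun hc => hv₀H (hWH hc)

/-- adapted basis of the small space -/
lemma adapted_basis {m : ℕ} (H' : Submodule (ZMod 2) (Vn m)) (p : ℕ)
    (hp : finrank (ZMod 2) H' = p) (hm : p + 1 = m) :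
    ∃ uu : Fin (p+1) → Vn m, LinearIndependent (ZMod 2) uu ∧
      (⊤ : Submodule (ZMod 2) (Vn m)) ≤ span (ZMod 2) (range uu) ∧
      (∀ j : Fin p, uu j.castSucc ∈ H') ∧ uu (Fin.last p) ∉ H' := by
  classical
  have hmV : finrank (ZMod 2) (Vn m) = m := Module.finrank_fin_fun (ZMod 2)
  set bH := (Module.finBasis (ZMod 2) ↥H').reindex (finCongr hp) with hbH
  set ufam : Fin p → Vn m := fun j => ((bH j : ↥H') : Vn m) with hufam
  have hufamH : ∀ j, ufam j ∈ H' := fun j => (bH j).2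
  have hufamli : LinearIndependent (ZMod 2) ufam :=
    bH.linearIndependent.map' H'.subtype (Submodule.ker_subtype H')
  have hufamsp : span (ZMod 2) (range ufam) = H' := by
    have h1 : range ufam = H'.subtype '' (range bH) := by
      rw [hufam]; ext w; simp [Set.range_comp]
    rw [h1, ← Submodule.map_span, Basis.span_eq, Submodule.map_subtype_top]
  have hH'ne : ∃ ul : Vn m, ul ∉ H' := by
    by_contra hc
    push_neg at hc
    have h8 : H' = ⊤ := Submodule.eq_top_iff'.mpr hc
    rw [h8, finrank_top, hmV] at hp
    omega
  obtain ⟨ul, hul⟩ := hH'ne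
  refine ⟨Fin.snoc ufam ul, ?_, ?_, ?_, ?_⟩
  · rw [linearIndependent_fin_snoc]
    exact ⟨hufamli, by rw [hufamsp]; exact hul⟩
  · -- spans everything
    have hsup : H' ⊔ span (ZMod 2) {ul} = ⊤ := by
      apply Submodule.eq_top_of_finrank_eq
      have hinf : H' ⊓ span (ZMod 2) {ul} = ⊥ := by
        rw [eq_bot_iff]
        rintro v ⟨hv1, hv2⟩
        obtain ⟨a, rfl⟩ := Submodule.mem_span_singleton.mp hv2
        rcases z2 a with rfl | rfl
        · simp
        · rw [one_smul] at hv1; exact absurd hv1 hul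
      have h1 := Submodule.finrank_sup_add_finrank_inf_eq H' (span (ZMod 2) {ul})
      rw [hinf] at h1
      have h2 : finrank (ZMod 2) (span (ZMod 2) {ul} : Submodule (ZMod 2) (Vn m)) = 1 :=
        finrank_span_singleton (fun hc => hul (hc ▸ H'.zero_mem))
      have h0 : finrank (ZMod 2) (⊥ : Submodule (ZMod 2) (Vn m)) = 0 := finrank_bot _ _
      omega
    rw [← hsup]
    apply sup_le
    · rw [← hufamsp]
      apply span_mono
      intro w hw
      obtain ⟨j, rfl⟩ := hw
      exact ⟨j.castSucc, by simp⟩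
    · apply span_le.mpr
      intro w hw
      simp only [Set.mem_singleton_iff] at hw
      subst hw
      apply subset_span
      exact ⟨Fin.last p, by simp⟩
  · intro j
    simpa using hufamH j
  · simpa using hul

end S14

namespace S14

/-- Assembly: build the linear embedding from matched families. -/
lemma assembly {n m : ℕ} {f : Vn n → ZMod 2} {fN : Vn m → ZMod 2}
    (hf : IsQuad f) (hfN : IsQuad fN)
    (H : Submodule (ZMod 2) (Vn n)) (H' : Submodule (ZMod 2) (Vn m))
    (p : ℕ) (hp : finrank (ZMod 2) H' = p)
    (uu : Fin (p+1) → Vn m) (huuli : LinearIndependent (ZMod 2) uu)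
    (huusp : (⊤ : Submodule (ZMod 2) (Vn m)) ≤ span (ZMod 2) (range uu))
    (huuH : ∀ j : Fin p, uu j.castSucc ∈ H') (huul : uu (Fin.last p) ∉ H')
    (vv : Fin (p+1) → Vn n) (hvvli : LinearIndependent (ZMod 2) vv)
    (hvvH : ∀ j : Fin p, vv j.castSucc ∈ H) (hvvl : vv (Fin.last p) ∉ H)
    (hvf : ∀ j, f (vv j) = fN (uu j))
    (hvB : ∀ j k, Bf f (vv j) (vv k) = Bf fN (uu j) (uu k)) :
    ∃ φ : Vn m →ₗ[ZMod 2] Vn n, Function.Injective φ ∧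
      (∀ x, f (φ x) = fN x) ∧ (∀ x, φ x ∈ H ↔ x ∈ H') := by
  classical
  set bU : Basis (Fin (p+1)) (ZMod 2) (Vn m) := Basis.mk huuli huusp with hbU
  set φ : Vn m →ₗ[ZMod 2] Vn n := bU.constr (ZMod 2) vv with hφ
  have hφu : ∀ j, φ (uu j) = vv j := by
    intro j
    have h1 : uu j = bU j := (Basis.mk_apply huuli huusp j).symm
    rw [h1, hφ, Basis.constr_basis]
  have hmem : ∀ x : Vn m, x ∈ span (ZMod 2) (range uu) := fun x => huusp trivial
  -- B-compatibility, one argument at a time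
  have Q1 : ∀ j (y : Vn m), Bf f (vv j) (φ y) = Bf fN (uu j) y := by
    intro j y
    induction hmem y using Submodule.span_induction with
    | mem x hx =>
      obtain ⟨k, rfl⟩ := hx
      rw [hφu k]
      exact hvB j k
    | zero =>
      rw [map_zero, IsQuad.By0 hf, IsQuad.By0 hfN]
    | add x y hx hy ihx ihy =>
      rw [map_add, IsQuad.addB2 hf, IsQuad.addB2 hfN, ihx, ihy]
    | smul a x hx ih =>
      rcases z2 a with rfl | rfl
      · rw [zero_smul, map_zero, IsQuad.By0 hf, IsQuad.By0 hfN]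
      · rwa [one_smul]
  have Q2 : ∀ x y : Vn m, Bf f (φ x) (φ y) = Bf fN x y := by
    intro x y
    induction hmem x using Submodule.span_induction with
    | mem x hx =>
      obtain ⟨k, rfl⟩ := hx
      rw [hφu k]
      exact Q1 k y
    | zero =>
      rw [map_zero, hf.B0, hfN.B0]
    | add x x' hx hx' ihx ihx' =>
      rw [map_add, hf.addB, hfN.addB, ihx, ihx']
    | smul a x hx ih =>
      rcases z2 a with rfl | rfl
      · rw [zero_smul, map_zero, hf.B0, hfN.B0]
      · rwa [one_smul]
  have P : ∀ x : Vn m, f (φ x) = fN x := by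
    intro x
    induction hmem x using Submodule.span_induction with
    | mem x hx =>
      obtain ⟨k, rfl⟩ := hx
      rw [hφu k]
      exact hvf k
    | zero =>
      rw [map_zero, hf.zero, hfN.zero]
    | add x x' hx hx' ihx ihx' =>
      rw [map_add, IsQuad.fadd (f := f) (φ x) (φ x'), IsQuad.fadd (f := fN) x x',
        ihx, ihx', Q2]
    | smul a x hx ih =>
      rcases z2 a with rfl | rfl
      · rw [zero_smul, map_zero, hf.zero, hfN.zero]
      · rwa [one_smul]
  have hinj : Function.Injective φ := by
    rw [← LinearMap.ker_eq_bot, LinearMap.ker_eq_bot']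
    intro x hx
    have hrepr := bU.sum_repr x
    have h1 : φ x = ∑ j, bU.repr x j • vv j := by
      conv_lhs => rw [← hrepr]
      rw [map_sum]
      apply Finset.sum_congr rfl
      intro j _
      rw [map_smul]
      have hb : φ (bU j) = vv j := by
        have hb1 : (bU j : Vn m) = uu j := Basis.mk_apply huuli huusp j
        rw [hb1]
        exact hφu j
      rw [hb]
    rw [hx] at h1
    have hall := Fintype.linearIndependent_iff.mp hvvli (fun j => bU.repr x j) h1.symm
    rw [← hrepr]
    apply Finset.sum_eq_zero
    intro j _
    have hj : bU.repr x j = 0 := hall j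
    rw [hj, zero_smul]
  -- membership correspondence
  have hspanH' : span (ZMod 2) (range (fun j : Fin p => uu j.castSucc)) = H' := by
    apply Submodule.eq_of_le_of_finrank_le
    · apply span_le.mpr
      rintro w ⟨j, rfl⟩
      exact huuH j
    · have hli : LinearIndependent (ZMod 2) (fun j : Fin p => uu j.castSucc) :=
        huuli.comp _ (Fin.castSucc_injective p)
      have := finrank_span_eq_card hli
      rw [this, hp]
      simp
  have hφH' : ∀ h ∈ H', φ h ∈ H := by
    intro h hh
    rw [← hspanH'] at hh
    induction hh using Submodule.span_induction with
    | mem w hw =>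
      obtain ⟨j, rfl⟩ := hw
      rw [hφu j.castSucc]
      exact hvvH j
    | zero => rw [map_zero]; exact H.zero_mem
    | add a b ha hb iha ihb => rw [map_add]; exact H.add_mem iha ihb
    | smul a w hw ih => rw [map_smul]; exact H.smul_mem a ih
  have htop : H' ⊔ span (ZMod 2) {uu (Fin.last p)} = ⊤ := by
    rw [eq_top_iff]
    refine le_trans huusp (span_le.mpr ?_)
    rintro w ⟨j, rfl⟩
    induction j using Fin.lastCases with
    | last =>
      exact le_sup_right (α := Submodule (ZMod 2) (Vn m)) (subset_span rfl)
    | cast j =>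
      exact le_sup_left (α := Submodule (ZMod 2) (Vn m)) (huuH j)
  have hmemiff : ∀ x : Vn m, φ x ∈ H ↔ x ∈ H' := by
    intro x
    have hx : x ∈ H' ⊔ span (ZMod 2) {uu (Fin.last p)} := htop ▸ trivial
    obtain ⟨h, hh, s, hs, rfl⟩ := Submodule.mem_sup.mp hx
    obtain ⟨a, rfl⟩ := Submodule.mem_span_singleton.mp hs
    rcases z2 a with rfl | rfl
    · rw [zero_smul, add_zero]
      exact ⟨fun _ => hh, fun _ => hφH' h hh⟩
    · rw [one_smul]
      constructor
      · intro hc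
        exfalso
        apply hvvl
        have h2 : φ (uu (Fin.last p)) = φ (h + uu (Fin.last p)) + φ h := by
          rw [← map_add, add_comm h, add_assoc, vadd, add_zero]
        rw [← hφu (Fin.last p), h2]
        exact H.add_mem hc (hφH' h hh)
      · intro hc
        exfalso
        apply huul
        have h2 : uu (Fin.last p) = (h + uu (Fin.last p)) + h := by
          rw [add_comm h, add_assoc, vadd, add_zero]
        rw [h2]
        exact H'.add_mem hc hh
  exact ⟨φ, hinj, P, hmemiff⟩

end S14

end Stmt14Aux

open Module Submodule S14

/-- Let `M = (E, G)` and `N = (E', G')` be matroids in `ℰ₃`, `H` a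
hyperplane of `G` and `H'` a hyperplane of `G'`. If `χ(M) ≥ dim(N) + min(4, χ(N) + 2)`,
then there is an induced embedding `φ` of `N` in `M` with `φ(G') ∩ H = φ(H')`. -/
theorem stmt14 (M N : BinMatroid) (hM : M.MemE 3) (hN : N.MemE 3)
    (H : Submodule (ZMod 2) (Fin M.dim → ZMod 2))
    (hH : Module.finrank (ZMod 2) H + 1 = M.dim)
    (H' : Submodule (ZMod 2) (Fin N.dim → ZMod 2))
    (hH' : Module.finrank (ZMod 2) H' + 1 = N.dim)
    (hchi : N.dim + min 4 (N.critNum + 2) ≤ M.critNum) :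
    ∃ φ : (Fin N.dim → ZMod 2) →ₗ[ZMod 2] (Fin M.dim → ZMod 2),
      Function.Injective φ ∧ φ '' N.E = M.E ∩ (Set.range φ \ {0}) ∧
      (Set.range φ \ {0}) ∩ (H : Set (Fin M.dim → ZMod 2)) =
        φ '' ((H' : Set (Fin N.dim → ZMod 2)) \ {0}) := by
  classical
  have hf : IsQuad (qf M.E) := quad_of_even M.E M.zero_not_mem (fun W hW => hM W hW)
  have hfN : IsQuad (qf N.E) := quad_of_even N.E N.zero_not_mem (fun W hW => hN W hW)
  have hnV : finrank (ZMod 2) (Vn M.dim) = M.dim := Module.finrank_fin_fun (ZMod 2)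
  have hmV : finrank (ZMod 2) (Vn N.dim) = N.dim := Module.finrank_fin_fun (ZMod 2)
  -- every zero subspace of M is small
  have hcrit : ∀ Z : Submodule (ZMod 2) (Vn M.dim), ZeroOn (qf M.E) Z →
      M.critNum + finrank (ZMod 2) Z ≤ M.dim := by
    intro Z hZ
    have hle : finrank (ZMod 2) Z ≤ M.dim := by
      have := Submodule.finrank_le Z
      omega
    have hmem : (M.dim - finrank (ZMod 2) Z) ∈ {k : ℕ |
        ∃ W : Submodule (ZMod 2) (Fin M.dim → ZMod 2),
        Module.finrank (ZMod 2) W = M.dim - k ∧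
        Disjoint ((W : Set (Fin M.dim → ZMod 2)) \ {0}) M.E} := by
      refine ⟨Z, by rw [Nat.sub_sub_self hle], ?_⟩
      rw [Set.disjoint_left]
      rintro x ⟨hxZ, -⟩ hxE
      have := hZ x hxZ
      rw [qf_eq_zero] at this
      exact this hxE
    have := Nat.sInf_le hmem
    unfold BinMatroid.critNum
    omega
  set p : ℕ := finrank (ZMod 2) H' with hp
  have hm : p + 1 = N.dim := hH'
  obtain ⟨uu, huuli, huusp, huuH, huul⟩ := adapted_basis H' p rfl hm
  have hmin2 : 2 ≤ min 4 (N.critNum + 2) := by omega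
  -- get matched family vv
  have hvv : ∃ vv : Fin (p+1) → Vn M.dim,
      (∀ j : Fin p, vv j.castSucc ∈ H) ∧ vv (Fin.last p) ∉ H ∧
      (∀ j, qf M.E (vv j) = qf N.E (uu j)) ∧
      (∀ j k, Bf (qf M.E) (vv j) (vv k) = Bf (qf N.E) (uu j) (uu k)) ∧
      LinearIndependent (ZMod 2) vv := by
    rcases Nat.eq_zero_or_pos N.critNum with hzero | hpos
    · -- N.E is empty
      have hNE : N.E = ∅ := by
        have hne : {k : ℕ | ∃ W : Submodule (ZMod 2) (Fin N.dim → ZMod 2),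
            Module.finrank (ZMod 2) W = N.dim - k ∧
            Disjoint ((W : Set (Fin N.dim → ZMod 2)) \ {0}) N.E}.Nonempty := by
          refine ⟨N.dim, ⊥, ?_, ?_⟩
          · rw [finrank_bot, Nat.sub_self]
          · rw [Set.disjoint_left]
            rintro x ⟨hx1, hx2⟩
            simp only [Submodule.bot_coe, Set.mem_singleton_iff] at hx1
            exact absurd hx1 hx2
        have h0 : (0 : ℕ) ∈ {k : ℕ | ∃ W : Submodule (ZMod 2) (Fin N.dim → ZMod 2),
            Module.finrank (ZMod 2) W = N.dim - k ∧
            Disjoint ((W : Set (Fin N.dim → ZMod 2)) \ {0}) N.E} := by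
          have := Nat.sInf_eq_zero.mp hzero
          rcases this with h | h
          · exact h
          · rw [h] at hne
            exact absurd rfl hne.ne_empty
        obtain ⟨W, hWfr, hWdisj⟩ := h0
        have hWtop : W = ⊤ := Submodule.eq_top_of_finrank_eq (by rw [hWfr, Nat.sub_zero, hmV])
        rw [Set.eq_empty_iff_forall_notMem]
        intro x hxE
        have hx0 : x ≠ 0 := fun hc => N.zero_not_mem (hc ▸ hxE)
        exact Set.disjoint_left.mp hWdisj ⟨by rw [hWtop]; trivial, hx0⟩ hxE
      have hfN0 : ∀ x, qf N.E x = 0 := fun x => qf_eq_zero.mpr (by rw [hNE]; exact id)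
      have hzd3 : ∀ Z : Submodule (ZMod 2) (Vn M.dim), ZeroOn (qf M.E) Z →
          finrank (ZMod 2) Z + (p + 3) ≤ M.dim := by
        intro Z hZ
        have := hcrit Z hZ
        omega
      obtain ⟨vv, h1, h2, h3, h4, h5⟩ := zero_branch hf H p hH hzd3
      refine ⟨vv, h1, h2, fun j => by rw [h3 j, hfN0], fun j k => ?_, h5⟩
      rw [h4 j k]
      unfold Bf
      rw [hfN0, hfN0, hfN0]
      decide
    · have hmin3 : 3 ≤ min 4 (N.critNum + 2) := by omega
      have hzd4 : ∀ Z : Submodule (ZMod 2) (Vn M.dim), ZeroOn (qf M.E) Z →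
          finrank (ZMod 2) Z + p + 4 ≤ M.dim := by
        intro Z hZ
        have := hcrit Z hZ
        omega
      obtain ⟨vv, h1, h2, h3, h4, h5⟩ := greedy hf H p hH
        (fun j => qf N.E (uu j)) (fun j k => Bf (qf N.E) (uu j) (uu k))
        (fun j k => IsQuad.Bsymm hfN _ _) (fun j => hfN.Bxx _) hzd4
      exact ⟨vv, h1, h2, h3, h4, h5⟩
  obtain ⟨vv, hvvH, hvvl, hvf, hvB, hvvli⟩ := hvv
  obtain ⟨φ, hinj, hP, hiff⟩ := assembly hf hfN H H' p rfl uu huuli huusp huuH huul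
    vv hvvli hvvH hvvl hvf hvB
  refine ⟨φ, hinj, ?_, ?_⟩
  · ext y
    constructor
    · rintro ⟨x, hxE, rfl⟩
      have h1 : qf N.E x = 1 := qf_eq_one.mpr hxE
      refine ⟨qf_eq_one.mp (by rw [hP]; exact h1), ⟨x, rfl⟩, ?_⟩
      intro hc
      rw [Set.mem_singleton_iff] at hc
      have h2 : qf M.E (φ x) = 0 := by rw [hc]; exact hf.zero
      rw [hP, h1] at h2
      exact one_ne_zero h2
    · rintro ⟨hyE, ⟨x, rfl⟩, hy0⟩
      exact ⟨x, qf_eq_one.mp (by rw [← hP]; exact qf_eq_one.mpr hyE), rfl⟩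
  · ext y
    constructor
    · rintro ⟨⟨⟨x, rfl⟩, hy0⟩, hyH⟩
      refine ⟨x, ⟨(hiff x).mp hyH, ?_⟩, rfl⟩
      intro hx0
      rw [Set.mem_singleton_iff] at hx0
      apply hy0
      rw [Set.mem_singleton_iff, hx0, map_zero]
    · rintro ⟨x, ⟨hxH', hx0⟩, rfl⟩
      rw [Set.mem_singleton_iff] at hx0
      refine ⟨⟨⟨x, rfl⟩, ?_⟩, (hiff x).mpr hxH'⟩
      intro hc
      rw [Set.mem_singleton_iff] at hc
      apply hx0
      apply hinj
      rw [hc, map_zero]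
end
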